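/- arXiv:math/0001031 — 6 statements merged into one kernel-verified Lean document; each statement's English description precedes it below -/
import Mathlib

section
/- Let G be a semidirect product U ⋊ L with U abelian. For every h in L, the conjugacy classes of G that intersect the coset Uh are in one-to-one correspondence with the orbits of the centralizer C_L(h) acting on the quotient group U/[U,h], where [U,h] = {u⁻¹·(h u h⁻¹) : u ∈ U}. -/
section aux

variable {N L : Type*} [CommGroup N] [Group L] (φ : L →* MulAut N) (h : L)

/-- The map `u ↦ u⁻¹ * φ h u` is a homomorphism since `N` is commutative. -/
private def psiK : N →* N :=
  MonoidHom.mk' (fun u => u⁻¹ * φ h u) (by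
    intro a b
    simp only [mul_inv_rev, map_mul]
    simp [mul_comm, mul_left_comm, mul_assoc])

private lemma mem_K {w : N} :
    w ∈ Subgroup.closure {w : N | ∃ u : N, w = u⁻¹ * φ h u} ↔ ∃ u : N, w = u⁻¹ * φ h u := by
  have hs : {w : N | ∃ u : N, w = u⁻¹ * φ h u} = ((psiK φ h).range : Subgroup N) := by
    ext w; simp [psiK, eq_comm]
  rw [hs, Subgroup.closure_eq]
  simp [psiK, eq_comm]

private lemma conj_w {u w : N} (hw : ∃ a : N, w = a⁻¹ * φ h a) :
    IsConj (⟨u, h⟩ : N ⋊[φ] L) ⟨u * w, h⟩ := by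
  obtain ⟨a, rfl⟩ := hw
  refine isConj_iff.2 ⟨⟨a⁻¹, 1⟩, ?_⟩
  ext
  · simp [mul_comm, mul_assoc, mul_left_comm]
  · simp

private lemma conj_l {u : N} {l : L} (hl : l ∈ Subgroup.centralizer ({h} : Set L)) :
    IsConj (⟨u, h⟩ : N ⋊[φ] L) ⟨φ l u, h⟩ := by
  have hlh : l * h * l⁻¹ = h := by
    rw [mul_inv_eq_iff_eq_mul]
    exact (Subgroup.mem_centralizer_iff.1 hl h rfl).symm
  refine isConj_iff.2 ⟨⟨1, l⟩, ?_⟩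
  ext
  · simp
  · simp [hlh]

private lemma conj_to_rel {g g' : N ⋊[φ] L} (hg : g.right = h) (hg' : g'.right = h)
    (hc : IsConj g g') :
    ∃ l ∈ Subgroup.centralizer ({h} : Set L),
      (QuotientGroup.mk (φ l g.left) :
        N ⧸ Subgroup.closure {w : N | ∃ u : N, w = u⁻¹ * φ h u}) =
        QuotientGroup.mk g'.left := by
  obtain ⟨c, hc⟩ := isConj_iff.1 hc
  obtain ⟨a, l⟩ := c
  obtain ⟨u, gh⟩ := g
  obtain ⟨v, gh'⟩ := g'
  dsimp only at hg hg' ⊢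
  subst hg hg'
  have h1 := congrArg SemidirectProduct.left hc
  have h2 := congrArg SemidirectProduct.right hc
  simp only [SemidirectProduct.mul_left, SemidirectProduct.mul_right,
    SemidirectProduct.inv_left, SemidirectProduct.inv_right] at h1 h2
  refine ⟨l, ?_, ?_⟩
  · rw [Subgroup.mem_centralizer_iff]
    intro x hx
    rw [Set.mem_singleton_iff] at hx; subst hx
    exact (mul_inv_eq_iff_eq_mul.1 h2).symm
  · rw [← MulAut.mul_apply, ← map_mul, h2] at h1
    rw [QuotientGroup.eq, mem_K]
    exact ⟨a⁻¹, by rw [← h1]; simp [mul_comm, mul_left_comm, mul_assoc]⟩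

end aux

/-- Conjugacy classes of `G = U ⋊ L` (with `U` abelian) meeting the coset `Uh`
are in bijection with the orbits of the centralizer `C_L(h)` on `U/[U,h]`,
where `[U,h]` is the subgroup generated by (in fact equal to) the set
`{u⁻¹ · (h u h⁻¹) : u ∈ U}`. -/
theorem stmt0 {N L : Type*} [CommGroup N] [Group L] (φ : L →* MulAut N) (h : L) :
    Nonempty
      ({c : ConjClasses (N ⋊[φ] L) // ∃ g ∈ c.carrier, g.right = h} ≃
        Quot (fun (x y : N ⧸ Subgroup.closure {w : N | ∃ u : N, w = u⁻¹ * φ h u}) =>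
          ∃ c ∈ Subgroup.centralizer ({h} : Set L), ∃ u : N,
            QuotientGroup.mk u = x ∧ QuotientGroup.mk (φ c u) = y)) := by
  classical
  -- the map from the quotient back to conjugacy classes, used to prove injectivity
  have hF1 : ∀ a b : N, (QuotientGroup.leftRel
      (Subgroup.closure {w : N | ∃ u : N, w = u⁻¹ * φ h u})).r a b →
      ConjClasses.mk (⟨a, h⟩ : N ⋊[φ] L) = ConjClasses.mk ⟨b, h⟩ := by
    intro a b hab
    rw [QuotientGroup.leftRel_apply, mem_K] at hab
    have := conj_w φ h (u := a) hab
    rw [mul_inv_cancel_left] at this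
    exact ConjClasses.mk_eq_mk_iff_isConj.2 this
  let F0 : (N ⧸ Subgroup.closure {w : N | ∃ u : N, w = u⁻¹ * φ h u}) →
      ConjClasses (N ⋊[φ] L) :=
    Quotient.lift (fun u => ConjClasses.mk (⟨u, h⟩ : N ⋊[φ] L)) hF1
  have hF2 : ∀ x y, (∃ c ∈ Subgroup.centralizer ({h} : Set L), ∃ u : N,
      QuotientGroup.mk u = x ∧ QuotientGroup.mk (φ c u) = y) → F0 x = F0 y := by
    rintro x y ⟨l, hl, u, rfl, rfl⟩
    exact ConjClasses.mk_eq_mk_iff_isConj.2 (conj_l φ h hl)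
  let F := Quot.lift F0 hF2
  refine ⟨Equiv.ofBijective (fun c => Quot.mk _ (QuotientGroup.mk c.2.choose.left))
    ⟨?_, ?_⟩⟩
  · -- injective
    intro c₁ c₂ hcc
    have key := congrArg F hcc
    have e1 : ∀ (c : {c : ConjClasses (N ⋊[φ] L) // ∃ g ∈ c.carrier, g.right = h}),
        F (Quot.mk _ (QuotientGroup.mk c.2.choose.left)) = c.1 := by
      intro c
      have hs := c.2.choose_spec
      have hmk : ConjClasses.mk c.2.choose = c.1 :=
        ConjClasses.mem_carrier_iff_mk_eq.1 hs.1
      have hgg : (⟨c.2.choose.left, h⟩ : N ⋊[φ] L) = c.2.choose := by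
        ext
        · rfl
        · exact hs.2.symm
      show ConjClasses.mk (⟨c.2.choose.left, h⟩ : N ⋊[φ] L) = c.1
      rw [hgg, hmk]
    rw [e1 c₁, e1 c₂] at key
    exact Subtype.ext key
  · -- surjective
    intro t
    obtain ⟨x, rfl⟩ := Quot.exists_rep t
    obtain ⟨u, rfl⟩ := QuotientGroup.mk_surjective x
    have hp : ∃ g ∈ (ConjClasses.mk (⟨u, h⟩ : N ⋊[φ] L)).carrier, g.right = h :=
      ⟨⟨u, h⟩, ConjClasses.mem_carrier_iff_mk_eq.2 rfl, rfl⟩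
    refine ⟨⟨ConjClasses.mk (⟨u, h⟩ : N ⋊[φ] L), hp⟩, ?_⟩
    have hs := hp.choose_spec
    have hconj : IsConj hp.choose (⟨u, h⟩ : N ⋊[φ] L) :=
      ConjClasses.mk_eq_mk_iff_isConj.1 (ConjClasses.mem_carrier_iff_mk_eq.1 hs.1)
    obtain ⟨l, hl, hq⟩ := conj_to_rel φ h hs.2 rfl hconj
    exact Quot.sound ⟨l, hl, hp.choose.left, rfl, hq⟩
end

section
/- In the semidirect product G = U ⋊ L with U abelian, two elements uh and vh (with u, v ∈ U, h ∈ L) are conjugate in G if and only if the images of u and v in U/[U,h] lie in the same orbit of C_L(h). -/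
private def stmtK {N L : Type*} [CommGroup N] [Group L] (φ : L →* MulAut N)
    (h : L) : Subgroup N where
  carrier := {w : N | ∃ n : N, w = n⁻¹ * φ h n}
  one_mem' := ⟨1, by simp⟩
  mul_mem' := by
    rintro a b ⟨m, rfl⟩ ⟨n, rfl⟩
    exact ⟨m * n, by rw [mul_inv, map_mul, mul_mul_mul_comm]⟩
  inv_mem' := by
    rintro a ⟨n, rfl⟩
    exact ⟨n⁻¹, by simp [mul_comm]⟩

private theorem stmtK_closure {N L : Type*} [CommGroup N] [Group L]
    (φ : L →* MulAut N) (h : L) :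
    Subgroup.closure {w : N | ∃ n : N, w = n⁻¹ * φ h n} = stmtK φ h :=
  le_antisymm ((Subgroup.closure_le _).2 fun _ hx => hx)
    fun _ hx => Subgroup.subset_closure hx

/-- In `G = U ⋊ L` with `U` abelian, `uh` and `vh` are conjugate in `G` iff the
images of `u` and `v` in `U/[U,h]` lie in the same orbit of `C_L(h)`. -/
theorem stmt1 {N L : Type*} [CommGroup N] [Group L] (φ : L →* MulAut N)
    (u v : N) (h : L) :
    IsConj (SemidirectProduct.inl u * SemidirectProduct.inr h)
        (SemidirectProduct.inl v * SemidirectProduct.inr h : N ⋊[φ] L) ↔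
      ∃ c ∈ Subgroup.centralizer ({h} : Set L),
        (QuotientGroup.mk (φ c u) :
            N ⧸ Subgroup.closure {w : N | ∃ n : N, w = n⁻¹ * φ h n}) =
          QuotientGroup.mk v := by
  rw [stmtK_closure, isConj_iff]
  constructor
  · rintro ⟨g, hg⟩
    rw [mul_inv_eq_iff_eq_mul] at hg
    have hleft := congrArg SemidirectProduct.left hg
    have hright := congrArg SemidirectProduct.right hg
    simp only [SemidirectProduct.mul_left, SemidirectProduct.mul_right,
      SemidirectProduct.left_inl, SemidirectProduct.right_inl,
      SemidirectProduct.left_inr, SemidirectProduct.right_inr,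
      map_one, mul_one, one_mul, MulAut.one_apply] at hleft hright
    refine ⟨g.right, ?_, ?_⟩
    · intro x hx
      rcases hx with rfl
      exact hright.symm
    · rw [QuotientGroup.eq]
      refine ⟨g.left⁻¹, ?_⟩
      -- hleft : g.left * φ g.right u = v * φ h g.left
      have key : (φ g.right u)⁻¹ * v = g.left * ((φ h) g.left)⁻¹ :=
        calc (φ g.right u)⁻¹ * v
            = (φ g.right u)⁻¹ * (v * φ h g.left) * (φ h g.left)⁻¹ := by group
          _ = (φ g.right u)⁻¹ * (g.left * φ g.right u) * (φ h g.left)⁻¹ := by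
              rw [hleft]
          _ = g.left * (φ h g.left)⁻¹ := by rw [mul_comm g.left]; group
      rw [key, map_inv]
      simp
  · rintro ⟨c, hc, hq⟩
    rw [QuotientGroup.eq] at hq
    obtain ⟨n, hn⟩ := hq
    have hch : c * h = h * c := (hc h rfl).symm
    have hv : v = φ c u * (n⁻¹ * φ h n) := by
      have : (φ c u) * ((φ c u)⁻¹ * v) = (φ c u) * (n⁻¹ * φ h n) := by rw [hn]
      rwa [mul_inv_cancel_left] at this
    refine ⟨SemidirectProduct.inl n⁻¹ * SemidirectProduct.inr c, ?_⟩
    rw [mul_inv_eq_iff_eq_mul]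
    ext
    · simp only [SemidirectProduct.mul_left, SemidirectProduct.left_inl,
        SemidirectProduct.right_inl, SemidirectProduct.left_inr,
        SemidirectProduct.right_inr, map_one, mul_one, one_mul, MulAut.one_apply,
        map_inv]
      rw [hv]
      simp [mul_comm, mul_left_comm, mul_assoc]
    · simp only [SemidirectProduct.mul_right, SemidirectProduct.right_inl,
        SemidirectProduct.right_inr, one_mul, mul_one]
      exact hch
end

section
/- Let λ = (λ₁ ≥ λ₂ ≥ ... ≥ λ_s) be a partition of n and J_λ the direct sum of nilpotent Jordan blocks of sizes λᵢ. The centralizer of J_λ in M_n(k) is isomorphic as a k-algebra to the algebra of s×s block matrices whose (i,j)-entry lies in x^{max(λᵢ−λⱼ,0)}·k[x]/(x^{λᵢ}), with multiplication induced from matrix multiplication over k[x]. -/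
open Polynomial

/-- The nilpotent matrix `J_λ`: direct sum of nilpotent Jordan blocks of sizes
`λ 0, λ 1, …` (1's on the subdiagonal of each block). -/
def Jblk (k : Type*) [Field k] {s : ℕ} (lam : Fin s → ℕ) :
    Matrix ((i : Fin s) × Fin (lam i)) ((i : Fin s) × Fin (lam i)) k :=
  Matrix.of fun p q =>
    if p.1 = q.1 ∧ (p.2 : ℕ) = (q.2 : ℕ) + 1 then 1 else 0

/-- The algebra of `s × s` block matrices whose `(i,j)`-entry lies in
`x^{max(λᵢ−λⱼ,0)}·k[x]`, realized as a subalgebra of `M_s(k[x])`. -/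
def Salg (k : Type*) [Field k] {s : ℕ} (lam : Fin s → ℕ) :
    Subalgebra k (Matrix (Fin s) (Fin s) (Polynomial k)) where
  carrier := {B | ∀ i j, (Polynomial.X : Polynomial k) ^ (lam i - lam j) ∣ B i j}
  add_mem' := by
    intro a b ha hb i j
    exact dvd_add (ha i j) (hb i j)
  zero_mem' := by intro i j; exact dvd_zero _
  mul_mem' := by
    intro a b ha hb i j
    rw [Matrix.mul_apply]
    refine Finset.dvd_sum fun l _ => ?_
    have h := mul_dvd_mul (ha i l) (hb l j)
    rw [← pow_add] at h
    exact dvd_trans (pow_dvd_pow _ (by omega)) h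
  one_mem' := by
    intro i j
    rcases eq_or_ne i j with rfl | h
    · simp [Matrix.one_apply_eq, Nat.sub_self]
    · simp [Matrix.one_apply_ne h]
  algebraMap_mem' := by
    intro r i j
    rcases eq_or_ne i j with rfl | h
    · simp [Matrix.algebraMap_matrix_apply, Nat.sub_self]
    · simp [Matrix.algebraMap_matrix_apply, h]

/-- The congruence identifying two elements of `Salg` whose `(i,j)`-entries differ by
a multiple of `x^{λᵢ}`; quotienting by it produces the algebra whose `(i,j)`-entry is
`x^{max(λᵢ−λⱼ,0)}·k[x]/(x^{λᵢ})`. -/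
def Srel (k : Type*) [Field k] {s : ℕ} (lam : Fin s → ℕ) :
    Salg k lam → Salg k lam → Prop := fun A B =>
  ∀ i j, (Polynomial.X : Polynomial k) ^ lam i ∣
    ((A : Matrix (Fin s) (Fin s) (Polynomial k)) i j -
      (B : Matrix (Fin s) (Fin s) (Polynomial k)) i j)

namespace Stmt9Aux

variable {k : Type*} [Field k] {s : ℕ}

abbrev Idx (lam : Fin s → ℕ) := (i : Fin s) × Fin (lam i)

def Phi0 (lam : Fin s → ℕ) (B : Matrix (Fin s) (Fin s) (Polynomial k)) :
    Matrix (Idx lam) (Idx lam) k :=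
  Matrix.of fun p q =>
    if (q.2 : ℕ) ≤ (p.2 : ℕ) then (B p.1 q.1).coeff ((p.2 : ℕ) - (q.2 : ℕ)) else 0

lemma conv (f g : Polynomial k) (I L a b : ℕ) (ha : a < I)
    (hf : ∀ d, d < I - L → f.coeff d = 0) :
    (∑ c ∈ Finset.range L,
      (if c ≤ a then f.coeff (a - c) else 0) * (if b ≤ c then g.coeff (c - b) else 0))
      = if b ≤ a then (f * g).coeff (a - b) else 0 := by
  by_cases hba : b ≤ a
  · rw [if_pos hba]
    set F : ℕ → k := fun c =>
      (if c ≤ a then f.coeff (a - c) else 0) * (if b ≤ c then g.coeff (c - b) else 0) with hF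
    have h1 : ∑ c ∈ Finset.range L, F c = ∑ c ∈ Finset.range (max L (a + 1)), F c := by
      refine Finset.sum_subset (Finset.range_subset_range.mpr (le_max_left _ _)) ?_
      intro c _ hc
      rw [Finset.mem_range, not_lt] at hc
      by_cases h : c ≤ a
      · simp only [hF, if_pos h, hf (a - c) (by omega), zero_mul]
      · simp only [hF, if_neg h, zero_mul]
    have h2 : ∑ c ∈ Finset.range (a + 1), F c = ∑ c ∈ Finset.range (max L (a + 1)), F c := by
      refine Finset.sum_subset (Finset.range_subset_range.mpr (le_max_right _ _)) ?_
      intro c _ hc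
      rw [Finset.mem_range, not_lt] at hc
      simp only [hF, if_neg (by omega : ¬ c ≤ a), zero_mul]
    rw [h1, ← h2, ← Finset.sum_range_reflect]
    have h3 : ∀ c ∈ Finset.range (a + 1),
        F (a + 1 - 1 - c) = f.coeff c * (if b ≤ a - c then g.coeff (a - c - b) else 0) := by
      intro c hc
      rw [Finset.mem_range] at hc
      simp only [hF]
      rw [if_pos (by omega : a + 1 - 1 - c ≤ a)]
      congr 2 <;> omega
    have h4 : (f * g).coeff (a - b)
        = ∑ c ∈ Finset.range (a - b + 1), f.coeff c * g.coeff (a - b - c) := by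
      rw [coeff_mul,
        Finset.Nat.sum_antidiagonal_eq_sum_range_succ (fun x y => f.coeff x * g.coeff y)]
    rw [Finset.sum_congr rfl h3, h4,
      ← Finset.sum_subset (Finset.range_subset_range.mpr (show a - b + 1 ≤ a + 1 by omega))
        (fun c hmem hc => by
          rw [Finset.mem_range] at hmem hc
          rw [if_neg (by omega : ¬ b ≤ a - c), mul_zero])]
    refine Finset.sum_congr rfl fun c hc => ?_
    rw [Finset.mem_range] at hc
    rw [if_pos (by omega : b ≤ a - c), show a - c - b = a - b - c from by omega]
  · rw [if_neg hba]
    refine Finset.sum_eq_zero fun c _ => ?_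
    by_cases h1 : c ≤ a
    · rw [if_neg (by omega : ¬ b ≤ c), mul_zero]
    · rw [if_neg h1, zero_mul]


lemma Phi0_apply (lam : Fin s → ℕ) (B : Matrix (Fin s) (Fin s) (Polynomial k))
    (p q : Idx lam) :
    Phi0 lam B p q
      = if (q.2 : ℕ) ≤ (p.2 : ℕ) then (B p.1 q.1).coeff ((p.2 : ℕ) - (q.2 : ℕ)) else 0 := rfl

lemma Phi0_add (lam : Fin s → ℕ) (A B : Matrix (Fin s) (Fin s) (Polynomial k)) :
    Phi0 lam (A + B) = Phi0 lam A + Phi0 lam B := by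
  ext p q
  simp only [Phi0_apply, Matrix.add_apply, coeff_add]
  split_ifs <;> simp

lemma Phi0_zero (lam : Fin s → ℕ) : Phi0 lam (0 : Matrix (Fin s) (Fin s) (Polynomial k)) = 0 := by
  ext p q
  simp [Phi0_apply]

lemma Phi0_one (lam : Fin s → ℕ) : Phi0 lam (1 : Matrix (Fin s) (Fin s) (Polynomial k)) = 1 := by
  ext ⟨i, a⟩ ⟨j, b⟩
  rcases eq_or_ne i j with rfl | hij
  · rcases eq_or_ne a b with rfl | hab
    · simp [Phi0_apply, Matrix.one_apply_eq]
    · have h2 : ((⟨i, a⟩ : Idx lam) : Idx lam) ≠ ⟨i, b⟩ := by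
        simp only [ne_eq, Sigma.mk.inj_iff, heq_eq_eq, true_and]; exact hab
      have hab' : (a : ℕ) ≠ (b : ℕ) := fun h => hab (Fin.ext h)
      rw [Phi0_apply, Matrix.one_apply_ne h2, Matrix.one_apply_eq, coeff_one]
      dsimp only
      split_ifs with h1 h2 <;> first | rfl | omega
  · have h2 : ((⟨i, a⟩ : Idx lam) : Idx lam) ≠ ⟨j, b⟩ := by
      simp only [ne_eq, Sigma.mk.inj_iff]; tauto
    rw [Phi0_apply, Matrix.one_apply_ne h2, Matrix.one_apply_ne hij]
    dsimp only
    split_ifs <;> simp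

lemma Phi0_algebraMap (lam : Fin s → ℕ) (r : k) :
    Phi0 lam (algebraMap k (Matrix (Fin s) (Fin s) (Polynomial k)) r)
      = algebraMap k (Matrix (Idx lam) (Idx lam) k) r := by
  ext ⟨i, a⟩ ⟨j, b⟩
  rw [Phi0_apply, Matrix.algebraMap_matrix_apply, Matrix.algebraMap_matrix_apply]
  rcases eq_or_ne i j with rfl | hij
  · have hd : ((⟨i, a⟩ : Idx lam) = ⟨i, b⟩) ↔ a = b := by
      simp [Sigma.mk.inj_iff]
    rcases eq_or_ne a b with rfl | hab
    · rw [if_pos rfl, if_pos (hd.mpr rfl)]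
      simp [Polynomial.algebraMap_apply, coeff_C]
    · have hab' : (a : ℕ) ≠ (b : ℕ) := fun h => hab (Fin.ext h)
      rw [if_pos rfl, if_neg (fun h => hab (hd.mp h))]
      simp only [Polynomial.algebraMap_apply, coeff_C]
      split_ifs with h1 h2 <;> first | rfl | omega
  · have hd : ((⟨i, a⟩ : Idx lam) : Idx lam) ≠ ⟨j, b⟩ := by
      simp only [ne_eq, Sigma.mk.inj_iff]; tauto
    rw [if_neg hij, if_neg hd]
    split_ifs <;> simp

lemma Phi0_mul (lam : Fin s → ℕ) (A B : Matrix (Fin s) (Fin s) (Polynomial k))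
    (hA : ∀ i j, (X : Polynomial k) ^ (lam i - lam j) ∣ A i j) :
    Phi0 lam (A * B) = Phi0 lam A * Phi0 lam B := by
  ext ⟨i, a⟩ ⟨j, b⟩
  rw [Matrix.mul_apply, Phi0_apply]
  rw [← Finset.univ_sigma_univ, Finset.sum_sigma]
  have key : ∀ l : Fin s,
      (∑ c : Fin (lam l), Phi0 lam A ⟨i, a⟩ ⟨l, c⟩ * Phi0 lam B ⟨l, c⟩ ⟨j, b⟩)
        = if (b : ℕ) ≤ (a : ℕ) then (A i l * B l j).coeff ((a : ℕ) - (b : ℕ)) else 0 := by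
    intro l
    simp only [Phi0_apply]
    rw [Fin.sum_univ_eq_sum_range
      (fun c => (if c ≤ (a : ℕ) then (A i l).coeff ((a : ℕ) - c) else 0)
        * (if (b : ℕ) ≤ c then (B l j).coeff (c - (b : ℕ)) else 0))]
    exact conv (A i l) (B l j) (lam i) (lam l) a b a.isLt
      (fun d hd => (X_pow_dvd_iff.mp (hA i l)) d hd)
  rw [Finset.sum_congr rfl fun l _ => key l]
  rw [Matrix.mul_apply]
  split_ifs with h
  · rw [finset_sum_coeff]
  · exact Finset.sum_const_zero.symm


lemma Jblk_apply (lam : Fin s → ℕ) (p q : Idx lam) :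
    Jblk k lam p q = if p.1 = q.1 ∧ (p.2 : ℕ) = (q.2 : ℕ) + 1 then 1 else 0 := rfl

lemma Mcongr (lam : Fin s → ℕ) (M : Matrix (Idx lam) (Idx lam) k) (i j : Fin s)
    (a a' : Fin (lam i)) (b b' : Fin (lam j)) (ha : (a : ℕ) = a') (hb : (b : ℕ) = b') :
    M ⟨i, a⟩ ⟨j, b⟩ = M ⟨i, a'⟩ ⟨j, b'⟩ := by
  obtain rfl : a = a' := Fin.ext ha
  obtain rfl : b = b' := Fin.ext hb
  rfl

lemma mulJ_apply (lam : Fin s → ℕ) (M : Matrix (Idx lam) (Idx lam) k) (p q : Idx lam) :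
    (M * Jblk k lam) p q =
      if h : (q.2 : ℕ) + 1 < lam q.1 then M p ⟨q.1, ⟨(q.2 : ℕ) + 1, h⟩⟩ else 0 := by
  rw [Matrix.mul_apply]
  split_ifs with h
  · rw [Finset.sum_eq_single (⟨q.1, ⟨(q.2 : ℕ) + 1, h⟩⟩ : Idx lam)]
    · rw [Jblk_apply, if_pos ⟨rfl, rfl⟩, mul_one]
    · rintro ⟨l, c⟩ - hne
      rw [Jblk_apply]
      by_cases hc : l = q.1 ∧ (c : ℕ) = (q.2 : ℕ) + 1
      · exfalso
        obtain ⟨rfl, hc2⟩ := hc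
        exact hne (by simp only [Sigma.mk.inj_iff, heq_eq_eq, true_and]; exact Fin.ext hc2)
      · rw [if_neg hc, mul_zero]
    · intro hmem
      exact absurd (Finset.mem_univ _) hmem
  · refine Finset.sum_eq_zero fun r _ => ?_
    rw [Jblk_apply]
    by_cases hc : r.1 = q.1 ∧ (r.2 : ℕ) = (q.2 : ℕ) + 1
    · exfalso
      obtain ⟨h1, h2⟩ := hc
      have h3 : lam r.1 = lam q.1 := by rw [h1]
      have h4 := r.2.isLt
      omega
    · rw [if_neg hc, mul_zero]

lemma Jmul_apply (lam : Fin s → ℕ) (M : Matrix (Idx lam) (Idx lam) k) (p q : Idx lam) :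
    (Jblk k lam * M) p q =
      if 0 < (p.2 : ℕ) then
        M ⟨p.1, ⟨(p.2 : ℕ) - 1, Nat.lt_of_le_of_lt (Nat.sub_le _ _) p.2.isLt⟩⟩ q else 0 := by
  rw [Matrix.mul_apply]
  split_ifs with h
  · rw [Finset.sum_eq_single
        (⟨p.1, ⟨(p.2 : ℕ) - 1, Nat.lt_of_le_of_lt (Nat.sub_le _ _) p.2.isLt⟩⟩ : Idx lam)]
    · rw [Jblk_apply, if_pos ⟨rfl, show (p.2 : ℕ) = (p.2 : ℕ) - 1 + 1 by omega⟩, one_mul]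
    · rintro ⟨l, c⟩ - hne
      rw [Jblk_apply]
      by_cases hc : p.1 = l ∧ (p.2 : ℕ) = (c : ℕ) + 1
      · exfalso
        obtain ⟨rfl, hc2⟩ := hc
        exact hne (by simp only [Sigma.mk.inj_iff, heq_eq_eq, true_and]; exact Fin.ext (show (c : ℕ) = (p.2 : ℕ) - 1 by omega))
      · rw [if_neg hc, zero_mul]
    · intro hmem
      exact absurd (Finset.mem_univ _) hmem
  · refine Finset.sum_eq_zero fun r _ => ?_
    rw [Jblk_apply]
    by_cases hc : p.1 = r.1 ∧ (p.2 : ℕ) = (r.2 : ℕ) + 1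
    · omega
    · rw [if_neg hc, zero_mul]

lemma cent_step (lam : Fin s → ℕ) (M : Matrix (Idx lam) (Idx lam) k)
    (hM : Jblk k lam * M = M * Jblk k lam) (p q : Idx lam) :
    (if 0 < (p.2 : ℕ) then
        M ⟨p.1, ⟨(p.2 : ℕ) - 1, Nat.lt_of_le_of_lt (Nat.sub_le _ _) p.2.isLt⟩⟩ q else 0)
      = if h : (q.2 : ℕ) + 1 < lam q.1 then M p ⟨q.1, ⟨(q.2 : ℕ) + 1, h⟩⟩ else 0 := by
  rw [← Jmul_apply, ← mulJ_apply, hM]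

lemma cent_diag (lam : Fin s → ℕ) (M : Matrix (Idx lam) (Idx lam) k)
    (hM : Jblk k lam * M = M * Jblk k lam) :
    ∀ (b : ℕ) (i j : Fin s) (hb : b < lam j) (a : Fin (lam i)),
      M ⟨i, a⟩ ⟨j, ⟨b, hb⟩⟩ =
        if h : b ≤ (a : ℕ) then
          M ⟨i, ⟨(a : ℕ) - b, Nat.lt_of_le_of_lt (Nat.sub_le _ _) a.isLt⟩⟩ ⟨j, ⟨0, by omega⟩⟩
        else 0 := by
  intro b
  induction b with
  | zero =>
    intro i j hb a
    rw [dif_pos (Nat.zero_le _)]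
    exact Mcongr lam M i j _ _ _ _ (show (a : ℕ) = (a : ℕ) - 0 by omega) rfl
  | succ b ih =>
    intro i j hb a
    have step := cent_step lam M hM ⟨i, a⟩ ⟨j, ⟨b, by omega⟩⟩
    rw [dif_pos hb] at step
    rw [show (⟨j, ⟨b + 1, hb⟩⟩ : Idx lam) = ⟨j, ⟨(b : ℕ) + 1, hb⟩⟩ from rfl, ← step]
    by_cases ha : 0 < (a : ℕ)
    · rw [if_pos ha, ih i j (by omega) _]
      by_cases h2 : b + 1 ≤ (a : ℕ)
      · rw [dif_pos (show b ≤ (a : ℕ) - 1 by omega), dif_pos h2]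
        exact Mcongr lam M i j _ _ _ _ (show (a : ℕ) - 1 - b = (a : ℕ) - (b + 1) by omega) rfl
      · rw [dif_neg (show ¬ b ≤ (a : ℕ) - 1 by omega), dif_neg h2]
    · rw [if_neg ha, dif_neg (by omega)]

lemma cent_low (lam : Fin s → ℕ) (hpos : ∀ i, 0 < lam i) (M : Matrix (Idx lam) (Idx lam) k)
    (hM : Jblk k lam * M = M * Jblk k lam) (i j : Fin s) (t : ℕ) (ht : t < lam i - lam j)
    (ht' : t < lam i) :
    M ⟨i, ⟨t, ht'⟩⟩ ⟨j, ⟨0, hpos j⟩⟩ = 0 := by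
  have hj := hpos j
  have step := cent_step lam M hM ⟨i, ⟨t + lam j, by omega⟩⟩ ⟨j, ⟨lam j - 1, by omega⟩⟩
  rw [if_pos (show 0 < t + lam j by omega),
    dif_neg (show ¬ (lam j - 1 + 1 < lam j) by omega)] at step
  rw [cent_diag lam M hM (lam j - 1) i j (by omega) _] at step
  rw [dif_pos (show lam j - 1 ≤ t + lam j - 1 by omega)] at step
  rw [← step]
  exact Mcongr lam M i j _ _ _ _ (show t = t + lam j - 1 - (lam j - 1) by omega) rfl


lemma Phi0_comm (lam : Fin s → ℕ) (B : Matrix (Fin s) (Fin s) (Polynomial k))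
    (hB : ∀ i j, (X : Polynomial k) ^ (lam i - lam j) ∣ B i j) :
    Jblk k lam * Phi0 lam B = Phi0 lam B * Jblk k lam := by
  ext ⟨i, a⟩ ⟨j, b⟩
  have hf : ∀ d < lam i - lam j, (B i j).coeff d = 0 := X_pow_dvd_iff.mp (hB i j)
  have ha := a.isLt
  have hb := b.isLt
  simp only [Jmul_apply, mulJ_apply, Phi0_apply]
  split_ifs <;>
    first
      | rfl
      | (exact hf _ (by omega))
      | (exact (hf _ (by omega)).symm)
      | (exfalso; omega)
      | (rw [show (a : ℕ) - 1 - (b : ℕ) = (a : ℕ) - ((b : ℕ) + 1) from by omega])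

lemma exists_pre (lam : Fin s → ℕ) (hpos : ∀ i, 0 < lam i)
    (M : Matrix (Idx lam) (Idx lam) k) (hM : Jblk k lam * M = M * Jblk k lam) :
    ∃ B : Matrix (Fin s) (Fin s) (Polynomial k),
      (∀ i j, (X : Polynomial k) ^ (lam i - lam j) ∣ B i j) ∧ Phi0 lam B = M := by
  set B : Matrix (Fin s) (Fin s) (Polynomial k) :=
    Matrix.of fun i j => ∑ t : Fin (lam i), C (M ⟨i, t⟩ ⟨j, ⟨0, hpos j⟩⟩) * X ^ (t : ℕ)
    with hBdef
  have hcoeff : ∀ (i j : Fin s) (d : ℕ), (B i j).coeff d =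
      if h : d < lam i then M ⟨i, ⟨d, h⟩⟩ ⟨j, ⟨0, hpos j⟩⟩ else 0 := by
    intro i j d
    rw [hBdef]
    simp only [Matrix.of_apply, finset_sum_coeff, coeff_C_mul, coeff_X_pow]
    split_ifs with h
    · rw [Finset.sum_eq_single (⟨d, h⟩ : Fin (lam i))]
      · rw [if_pos rfl, mul_one]
      · intro t _ ht
        rw [if_neg (fun he => ht (Fin.ext he.symm)), mul_zero]
      · intro hm
        exact absurd (Finset.mem_univ _) hm
    · refine Finset.sum_eq_zero fun t _ => ?_
      rw [if_neg (by have := t.isLt; omega), mul_zero]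
  refine ⟨B, fun i j => ?_, ?_⟩
  · rw [X_pow_dvd_iff]
    intro d hd
    rw [hcoeff, dif_pos (by omega)]
    exact cent_low lam hpos M hM i j d hd _
  · ext ⟨i, a⟩ ⟨j, b⟩
    rw [Phi0_apply,
      show (⟨j, b⟩ : Idx lam) = ⟨j, ⟨(b : ℕ), b.isLt⟩⟩ from by rw [Fin.eta],
      cent_diag lam M hM (b : ℕ) i j b.isLt a]
    have ha := a.isLt
    split_ifs with h
    · rw [hcoeff, dif_pos (by omega : (a : ℕ) - (b : ℕ) < lam i)]
    · rfl

end Stmt9Aux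

open Stmt9Aux

/-- The centralizer of `J_λ` in `M_n(k)` (for a partition `λ` of `n`, listed in
decreasing order) is isomorphic as a `k`-algebra to the algebra of `s × s` block
matrices whose `(i,j)`-entry lies in `x^{max(λᵢ−λⱼ,0)}·k[x]/(x^{λᵢ})`, with
multiplication induced by matrix multiplication over `k[x]`. -/
theorem stmt9 (k : Type*) [Field k] {s : ℕ} (lam : Fin s → ℕ)
    (hdec : Antitone lam) (hpos : ∀ i, 0 < lam i) :
    Nonempty
      ((Subalgebra.centralizer k
          ({Jblk k lam} : Set (Matrix ((i : Fin s) × Fin (lam i))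
            ((i : Fin s) × Fin (lam i)) k))) ≃ₐ[k]
        RingQuot (Srel k lam)) := by
  classical
  have hcent : ∀ B : Matrix (Fin s) (Fin s) (Polynomial k),
      (∀ i j, (X : Polynomial k) ^ (lam i - lam j) ∣ B i j) →
      Phi0 lam B ∈ Subalgebra.centralizer k ({Jblk k lam} : Set _) := by
    intro B hB
    rw [Subalgebra.mem_centralizer_iff]
    intro g hg
    rw [Set.mem_singleton_iff] at hg
    subst hg
    exact Phi0_comm lam B hB
  let Ψ : Salg k lam →ₐ[k] (Subalgebra.centralizer k ({Jblk k lam} : Set _)) :=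
    { toFun := fun B =>
        ⟨Phi0 lam (B : Matrix (Fin s) (Fin s) (Polynomial k)), hcent _ B.2⟩
      map_one' := Subtype.ext (Phi0_one lam)
      map_mul' := fun A B => Subtype.ext (Phi0_mul lam _ _ A.2)
      map_zero' := Subtype.ext (Phi0_zero lam)
      map_add' := fun A B => Subtype.ext (Phi0_add lam _ _)
      commutes' := fun r => Subtype.ext (Phi0_algebraMap lam r) }
  have hrel : ∀ ⦃x y : Salg k lam⦄, Srel k lam x y → Ψ x = Ψ y := by
    intro A B h
    apply Subtype.ext
    show Phi0 lam (A : Matrix (Fin s) (Fin s) (Polynomial k)) = Phi0 lam (B : _)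
    ext ⟨i, a⟩ ⟨j, b⟩
    rw [Phi0_apply, Phi0_apply]
    split_ifs with hba
    · have h2 := (X_pow_dvd_iff.mp (h i j)) ((a : ℕ) - (b : ℕ)) (by have := a.isLt; omega)
      rw [coeff_sub] at h2
      exact sub_eq_zero.mp h2
    · rfl
  let φ : RingQuot (Srel k lam) →ₐ[k] (Subalgebra.centralizer k ({Jblk k lam} : Set _)) :=
    RingQuot.liftAlgHom k ⟨Ψ, hrel⟩
  have hsurj : Function.Surjective φ := by
    intro m
    have hM : Jblk k lam * (m : Matrix _ _ k) = (m : Matrix _ _ k) * Jblk k lam :=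
      ((Subalgebra.mem_centralizer_iff (R := k)).mp m.2) _ rfl
    obtain ⟨B, hB, hPhi⟩ := exists_pre lam hpos (m : Matrix _ _ k) hM
    refine ⟨RingQuot.mkAlgHom k (Srel k lam) ⟨B, hB⟩, ?_⟩
    show RingQuot.liftAlgHom k ⟨Ψ, hrel⟩ _ = m
    rw [RingQuot.liftAlgHom_mkAlgHom_apply]
    exact Subtype.ext hPhi
  have hinj : Function.Injective φ := by
    intro x y hxy
    obtain ⟨A, rfl⟩ := RingQuot.mkAlgHom_surjective k (Srel k lam) x
    obtain ⟨B, rfl⟩ := RingQuot.mkAlgHom_surjective k (Srel k lam) y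
    have hxy' : Ψ A = Ψ B := by
      have h1 : φ (RingQuot.mkAlgHom k (Srel k lam) A) = Ψ A :=
        RingQuot.liftAlgHom_mkAlgHom_apply k Ψ hrel A
      have h2 : φ (RingQuot.mkAlgHom k (Srel k lam) B) = Ψ B :=
        RingQuot.liftAlgHom_mkAlgHom_apply k Ψ hrel B
      rw [← h1, ← h2, hxy]
    apply RingQuot.mkAlgHom_rel
    intro i j
    rw [X_pow_dvd_iff]
    intro d hd
    have hP : Phi0 lam (A : Matrix (Fin s) (Fin s) (Polynomial k)) = Phi0 lam (B : _) :=
      congrArg Subtype.val hxy'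
    have he := congrFun (congrFun hP ⟨i, ⟨d, hd⟩⟩) ⟨j, ⟨0, hpos j⟩⟩
    rw [Phi0_apply, Phi0_apply, if_pos (Nat.zero_le _), if_pos (Nat.zero_le _)] at he
    rw [coeff_sub, sub_eq_zero]
    simpa using he
  exact ⟨(AlgEquiv.ofBijective φ ⟨hinj, hsurj⟩).symm⟩
end

section
/- Let α ∈ k^× and let A = J_μ(α) ∈ GL_m(k), B = J_ν(α) ∈ GL_n(k) be Jordan matrices with the same eigenvalue α, where μ, ν are partitions of m and n respectively. Then the cokernel of the k-linear map v ↦ Av − vB on M_{m,n}(k) has dimension Σ_{i,j} min(μᵢ, νⱼ). -/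
/-- The Jordan matrix `J_λ(α)`: direct sum of Jordan blocks of sizes `λ 0, λ 1, …`
with eigenvalue `α` (α on the diagonal, 1's on the subdiagonal of each block). -/
def Jpart (k : Type*) [Field k] {s : ℕ} (lam : Fin s → ℕ) (a : k) :
    Matrix ((i : Fin s) × Fin (lam i)) ((i : Fin s) × Fin (lam i)) k :=
  Matrix.of fun p q =>
    if p.1 = q.1 ∧ (p.2 : ℕ) = (q.2 : ℕ) then a
    else if p.1 = q.1 ∧ (p.2 : ℕ) = (q.2 : ℕ) + 1 then 1 else 0

/-- The `k`-linear map `v ↦ J_μ(α)·v − v·J_ν(α)` on `M_{m,n}(k)`. -/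
def commMap (k : Type*) [Field k] {s t : ℕ} (mu : Fin s → ℕ) (nu : Fin t → ℕ)
    (a : k) :
    Matrix ((i : Fin s) × Fin (mu i)) ((j : Fin t) × Fin (nu j)) k →ₗ[k]
      Matrix ((i : Fin s) × Fin (mu i)) ((j : Fin t) × Fin (nu j)) k where
  toFun v := Jpart k mu a * v - v * Jpart k nu a
  map_add' x y := by simp only [Matrix.mul_add, Matrix.add_mul]; abel
  map_smul' c x := by
    simp only [Matrix.mul_smul, Matrix.smul_mul, smul_sub, RingHom.id_apply]

section Aux
variable {k : Type*} [Field k] {s t : ℕ} (mu : Fin s → ℕ) (nu : Fin t → ℕ)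

lemma Jpart_zero_apply (lam : Fin s → ℕ) (p q : (i : Fin s) × Fin (lam i)) :
    Jpart k lam 0 p q = if p.1 = q.1 ∧ (p.2 : ℕ) = (q.2 : ℕ) + 1 then 1 else 0 := by
  unfold Jpart
  simp only [Matrix.of_apply]
  by_cases h1 : p.1 = q.1 ∧ (p.2 : ℕ) = (q.2 : ℕ)
  · rw [if_pos h1, if_neg (fun h2 => by omega)]
  · rw [if_neg h1]

lemma Jpart_decomp (lam : Fin s → ℕ) (a : k) :
    Jpart k lam a = Jpart k lam 0 + a • (1 : Matrix _ _ k) := by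
  ext p q
  rcases p with ⟨i, p⟩
  rcases q with ⟨i', q⟩
  simp only [Jpart, Matrix.of_apply, Matrix.add_apply, Matrix.smul_apply, Matrix.one_apply,
    smul_eq_mul]
  by_cases hi : i = i'
  · subst hi
    by_cases hpq : (p : ℕ) = (q : ℕ)
    · have : p = q := Fin.ext hpq
      subst this
      simp [hpq]
    · have : ¬ ((⟨i, p⟩ : (i : Fin s) × Fin (lam i)) = ⟨i, q⟩) := by
        simp [Sigma.mk.inj_iff, Fin.ext_iff, hpq]
      simp [hpq, this]
  · have : ¬ ((⟨i, p⟩ : (i : Fin s) × Fin (lam i)) = ⟨i', q⟩) := by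
      simp [Sigma.mk.inj_iff, hi]
    simp [hi, this]

lemma commMap_eq_zero_a (a : k) : commMap k mu nu a = commMap k mu nu 0 := by
  apply LinearMap.ext
  intro v
  show Jpart k mu a * v - v * Jpart k nu a = Jpart k mu 0 * v - v * Jpart k nu 0
  rw [Jpart_decomp mu a, Jpart_decomp nu a]
  simp only [Matrix.add_mul, Matrix.mul_add, Matrix.smul_mul, Matrix.mul_smul, Matrix.one_mul, Matrix.mul_one]
  abel

end Aux

section Aux2
variable {k : Type*} [Field k] {s t : ℕ} (mu : Fin s → ℕ) (nu : Fin t → ℕ)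

lemma Jmul_left (v : Matrix ((i : Fin s) × Fin (mu i)) ((j : Fin t) × Fin (nu j)) k)
    (i : Fin s) (p : Fin (mu i)) (x : (j : Fin t) × Fin (nu j)) :
    (Jpart k mu 0 * v) ⟨i, p⟩ x =
      if 0 < (p : ℕ) then v ⟨i, ⟨(p : ℕ) - 1, by omega⟩⟩ x else 0 := by
  rw [Matrix.mul_apply]
  have key : ∀ y : (i : Fin s) × Fin (mu i),
      Jpart k mu 0 ⟨i, p⟩ y * v y x =
        if 0 < (p : ℕ) ∧ y = ⟨i, ⟨(p : ℕ) - 1, by omega⟩⟩ then v y x else 0 := by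
    intro ⟨i', r⟩
    rw [Jpart_zero_apply]
    by_cases hi : i = i'
    · subst hi
      simp only [Sigma.mk.inj_iff, heq_eq_eq, Fin.ext_iff, true_and]
      split_ifs <;> first | (exfalso; omega) | exact one_mul _ | exact zero_mul _
    · rw [if_neg (fun h => hi h.1), if_neg (fun h => by
        have := h.2; rw [Sigma.mk.inj_iff] at this; exact hi this.1.symm), zero_mul]
  rw [Finset.sum_congr rfl (fun y _ => key y)]
  by_cases hp : 0 < (p : ℕ)
  · simp only [hp, true_and, if_pos]
    rw [Finset.sum_ite_eq' Finset.univ]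
    simp
  · simp [hp]

lemma Jmul_right (v : Matrix ((i : Fin s) × Fin (mu i)) ((j : Fin t) × Fin (nu j)) k)
    (x : (i : Fin s) × Fin (mu i)) (j : Fin t) (q : Fin (nu j)) :
    (v * Jpart k nu 0) x ⟨j, q⟩ =
      if h : (q : ℕ) + 1 < nu j then v x ⟨j, ⟨(q : ℕ) + 1, h⟩⟩ else 0 := by
  rw [Matrix.mul_apply]
  by_cases hq : (q : ℕ) + 1 < nu j
  · rw [dif_pos hq]
    have key : ∀ y : (j : Fin t) × Fin (nu j),
        v x y * Jpart k nu 0 y ⟨j, q⟩ =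
          if y = ⟨j, ⟨(q : ℕ) + 1, hq⟩⟩ then v x y else 0 := by
      intro ⟨j', r⟩
      rw [Jpart_zero_apply]
      by_cases hj : j' = j
      · subst hj
        simp only [Sigma.mk.inj_iff, heq_eq_eq, Fin.ext_iff, true_and]
        split_ifs <;> first | (exfalso; omega) | exact mul_one _ | exact mul_zero _
      · rw [if_neg (fun h => hj h.1), if_neg (fun h => by
          rw [Sigma.mk.inj_iff] at h; exact hj h.1), mul_zero]
    rw [Finset.sum_congr rfl (fun y _ => key y)]
    rw [Finset.sum_ite_eq' Finset.univ]
    simp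
  · rw [dif_neg hq]
    apply Finset.sum_eq_zero
    intro ⟨j', r⟩ _
    rw [Jpart_zero_apply]
    rw [if_neg, mul_zero]
    rintro ⟨h1, h2⟩
    apply hq
    simp at h1
    subst h1
    simp at h2
    omega

lemma commMap_zero_apply (v : Matrix ((i : Fin s) × Fin (mu i)) ((j : Fin t) × Fin (nu j)) k)
    (i : Fin s) (p : Fin (mu i)) (j : Fin t) (q : Fin (nu j)) :
    commMap k mu nu 0 v ⟨i, p⟩ ⟨j, q⟩ =
      (if 0 < (p : ℕ) then v ⟨i, ⟨(p : ℕ) - 1, by omega⟩⟩ ⟨j, q⟩ else 0) -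
      (if h : (q : ℕ) + 1 < nu j then v ⟨i, p⟩ ⟨j, ⟨(q : ℕ) + 1, h⟩⟩ else 0) := by
  show (Jpart k mu 0 * v - v * Jpart k nu 0) ⟨i, p⟩ ⟨j, q⟩ = _
  rw [Matrix.sub_apply, Jmul_left, Jmul_right]

end Aux2

section Aux3
variable {k : Type*} [Field k] {s t : ℕ} (mu : Fin s → ℕ) (nu : Fin t → ℕ)

/-- The section: builds a matrix from diagonal data. -/
def sigFun (f : ∀ i : Fin s, ∀ j : Fin t, Fin (min (mu i) (nu j)) → k) :
    Matrix ((i : Fin s) × Fin (mu i)) ((j : Fin t) × Fin (nu j)) k :=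
  fun p q =>
    if h : (q.2 : ℕ) ≤ (p.2 : ℕ) ∧ mu p.1 - 1 - (p.2 : ℕ) ≤ nu q.1 - 1 - (q.2 : ℕ) then
      f p.1 q.1 ⟨(q.2 : ℕ) + (mu p.1 - 1) - (p.2 : ℕ), by
        have h1 := p.2.isLt; have h2 := q.2.isLt; omega⟩
    else 0

/-- Reads off the last row of each row-block. -/
def phiFun (v : Matrix ((i : Fin s) × Fin (mu i)) ((j : Fin t) × Fin (nu j)) k) :
    ∀ i : Fin s, ∀ j : Fin t, Fin (min (mu i) (nu j)) → k :=
  fun i j c =>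
    v ⟨i, ⟨mu i - 1, by have := c.isLt; omega⟩⟩ ⟨j, ⟨(c : ℕ), by have := c.isLt; omega⟩⟩

def sigL : (∀ i : Fin s, ∀ j : Fin t, Fin (min (mu i) (nu j)) → k) →ₗ[k]
    Matrix ((i : Fin s) × Fin (mu i)) ((j : Fin t) × Fin (nu j)) k where
  toFun := sigFun mu nu
  map_add' f g := by
    funext p q
    simp only [sigFun, Matrix.add_apply, Pi.add_apply]
    split_ifs <;> simp
  map_smul' c f := by
    funext p q
    simp only [sigFun, Matrix.smul_apply, Pi.smul_apply, RingHom.id_apply, smul_eq_mul]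
    split_ifs <;> simp

def phiL : Matrix ((i : Fin s) × Fin (mu i)) ((j : Fin t) × Fin (nu j)) k →ₗ[k]
    (∀ i : Fin s, ∀ j : Fin t, Fin (min (mu i) (nu j)) → k) where
  toFun := phiFun mu nu
  map_add' v w := rfl
  map_smul' c v := rfl

lemma phi_sig (f : ∀ i : Fin s, ∀ j : Fin t, Fin (min (mu i) (nu j)) → k) :
    phiFun mu nu (sigFun mu nu f) = f := by
  funext i j c
  have hc := c.isLt
  simp only [phiFun, sigFun, Fin.val_mk]
  rw [dif_pos (by omega)]
  congr 1
  exact Fin.ext (by simp only [Fin.val_mk]; omega)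

lemma sig_mem_ker (f : ∀ i : Fin s, ∀ j : Fin t, Fin (min (mu i) (nu j)) → k) :
    commMap k mu nu 0 (sigFun mu nu f) = 0 := by
  ext ⟨i, p⟩ ⟨j, q⟩
  rw [commMap_zero_apply, Matrix.zero_apply, sub_eq_zero]
  have hp := p.isLt
  have hq := q.isLt
  simp only [sigFun]
  split_ifs with h1 h2 h3 h2 h3 <;>
    first
      | rfl
      | (exfalso; omega)
      | (congr 1; exact Fin.ext (by simp; omega))
end Aux3

section Aux4
variable {k : Type*} [Field k] {s t : ℕ} (mu : Fin s → ℕ) (nu : Fin t → ℕ)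

lemma smk_eq {n : ℕ} {g : Fin n → ℕ} (i : Fin n) (a b : Fin (g i)) (h : (a : ℕ) = (b : ℕ)) :
    (⟨i, a⟩ : (i : Fin n) × Fin (g i)) = ⟨i, b⟩ := by
  rw [Fin.ext h]

lemma vcongr (v : Matrix ((i : Fin s) × Fin (mu i)) ((j : Fin t) × Fin (nu j)) k)
    {P P' : (i : Fin s) × Fin (mu i)} {Q Q' : (j : Fin t) × Fin (nu j)}
    (hP : P = P') (hQ : Q = Q') : v P Q = v P' Q' := by rw [hP, hQ]

lemma sig_phi (v : Matrix ((i : Fin s) × Fin (mu i)) ((j : Fin t) × Fin (nu j)) k)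
    (hv : commMap k mu nu 0 v = 0) : sigFun mu nu (phiFun mu nu v) = v := by
  have hrec : ∀ (i : Fin s) (p : Fin (mu i)) (j : Fin t) (q : Fin (nu j)),
      (if 0 < (p : ℕ) then v ⟨i, ⟨(p : ℕ) - 1, by omega⟩⟩ ⟨j, q⟩ else 0) =
      (if h : (q : ℕ) + 1 < nu j then v ⟨i, p⟩ ⟨j, ⟨(q : ℕ) + 1, h⟩⟩ else 0) := by
    intro i p j q
    have h0 : commMap k mu nu 0 v ⟨i, p⟩ ⟨j, q⟩ = 0 := by rw [hv]; rfl
    rw [commMap_zero_apply] at h0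
    exact sub_eq_zero.mp h0
  -- down-right step
  have stepA : ∀ (i : Fin s) (j : Fin t) (p : ℕ) (hp : p + 1 < mu i) (q : Fin (nu j)),
      v ⟨i, ⟨p, by omega⟩⟩ ⟨j, q⟩ =
        (if h : (q : ℕ) + 1 < nu j then v ⟨i, ⟨p + 1, hp⟩⟩ ⟨j, ⟨(q : ℕ) + 1, h⟩⟩ else 0) := by
    intro i j p hp q
    have h := hrec i ⟨p + 1, hp⟩ j q
    rw [if_pos (Nat.succ_pos p)] at h
    exact h
  -- up-left step
  have stepB : ∀ (i : Fin s) (j : Fin t) (p : Fin (mu i)) (q : ℕ) (hq : q + 1 < nu j),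
      v ⟨i, p⟩ ⟨j, ⟨q + 1, hq⟩⟩ =
        (if h : 0 < (p : ℕ) then v ⟨i, ⟨(p : ℕ) - 1, by omega⟩⟩ ⟨j, ⟨q, by omega⟩⟩ else 0) := by
    intro i j p q hq
    have h := hrec i p j ⟨q, by omega⟩
    rw [dif_pos hq] at h
    exact h.symm
  -- entries strictly above the main diagonals vanish
  have above : ∀ (i : Fin s) (j : Fin t) (n : ℕ) (p : Fin (mu i)) (q : Fin (nu j)),
      (p : ℕ) = n → (p : ℕ) < (q : ℕ) → v ⟨i, p⟩ ⟨j, q⟩ = 0 := by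
    intro i j n
    induction n with
    | zero =>
      intro p q hpn hpq
      have hqlt : ((q : ℕ) - 1) + 1 < nu j := by have := q.isLt; omega
      have h := stepB i j p ((q : ℕ) - 1) hqlt
      rw [vcongr mu nu v rfl (smk_eq j ⟨(q : ℕ) - 1 + 1, hqlt⟩ q (by simp; omega))] at h
      rw [h, dif_neg (by omega)]
    | succ n ih =>
      intro p q hpn hpq
      have hqlt : ((q : ℕ) - 1) + 1 < nu j := by have := q.isLt; omega
      have h := stepB i j p ((q : ℕ) - 1) hqlt
      rw [vcongr mu nu v rfl (smk_eq j ⟨(q : ℕ) - 1 + 1, hqlt⟩ q (by simp; omega))] at h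
      rw [h, dif_pos (by omega)]
      exact ih _ _ (by simp; omega) (by simp; omega)
  -- on/below diagonal: propagate to the last row
  have diag : ∀ (i : Fin s) (j : Fin t) (d : ℕ) (p : Fin (mu i)) (q : Fin (nu j)),
      mu i - 1 - (p : ℕ) = d → (q : ℕ) ≤ (p : ℕ) →
      v ⟨i, p⟩ ⟨j, q⟩ = sigFun mu nu (phiFun mu nu v) ⟨i, p⟩ ⟨j, q⟩ := by
    intro i j d
    induction d with
    | zero =>
      intro p q hd hqp
      have hp := p.isLt; have hq := q.isLt
      simp only [sigFun, phiFun]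
      rw [dif_pos (by simp; omega)]
      exact vcongr mu nu v (smk_eq i p ⟨mu i - 1, by omega⟩ (by simp; omega))
        (smk_eq j q ⟨(q : ℕ) + (mu i - 1) - (p : ℕ), by omega⟩ (by simp; omega))
    | succ d ih =>
      intro p q hd hqp
      have hp := p.isLt; have hq := q.isLt
      have hp1 : (p : ℕ) + 1 < mu i := by omega
      have h := stepA i j (p : ℕ) hp1 q
      rw [vcongr mu nu v (smk_eq i ⟨(p : ℕ), by omega⟩ p rfl) rfl] at h
      rw [h]
      by_cases hq1 : (q : ℕ) + 1 < nu j
      · rw [dif_pos hq1, ih ⟨(p : ℕ) + 1, hp1⟩ ⟨(q : ℕ) + 1, hq1⟩ (by simp; omega) (by simp; omega)]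
        simp only [sigFun, phiFun, Fin.val_mk]
        split_ifs with h1 h2 h2 <;>
          first
            | rfl
            | (exfalso; omega)
            | (exact vcongr mu nu v rfl (smk_eq j _ _ (by simp only [Fin.val_mk]; omega)))
      · rw [dif_neg hq1]
        simp only [sigFun]
        rw [dif_neg (by rintro ⟨h1, h2⟩; omega)]
  funext P Q
  rcases P with ⟨i, p⟩
  rcases Q with ⟨j, q⟩
  rcases le_or_gt (q : ℕ) (p : ℕ) with hle | hlt
  · exact (diag i j (mu i - 1 - (p : ℕ)) p q rfl hle).symm
  · rw [above i j (p : ℕ) p q rfl hlt]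
    simp only [sigFun]
    rw [dif_neg (by rintro ⟨h1, h2⟩; omega)]
end Aux4

/-- For `A = J_μ(α)`, `B = J_ν(α)` Jordan matrices with the same eigenvalue `α ≠ 0`,
the cokernel of `v ↦ Av − vB` on `M_{m,n}(k)` has dimension `Σ_{i,j} min(μᵢ, νⱼ)`. -/
theorem stmt16 {k : Type*} [Field k] {s t : ℕ} (mu : Fin s → ℕ) (nu : Fin t → ℕ)
    (hmu : Antitone mu) (hnu : Antitone nu) (a : k) (ha : a ≠ 0) :
    Module.finrank k
        ((Matrix ((i : Fin s) × Fin (mu i)) ((j : Fin t) × Fin (nu j)) k) ⧸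
          LinearMap.range (commMap k mu nu a)) =
      ∑ i : Fin s, ∑ j : Fin t, min (mu i) (nu j) := by
  classical
  rw [commMap_eq_zero_a mu nu a]
  have E : LinearMap.ker (commMap k mu nu 0) ≃ₗ[k]
      (∀ i : Fin s, ∀ j : Fin t, Fin (min (mu i) (nu j)) → k) :=
    LinearEquiv.ofLinear
      ((phiL mu nu).comp (LinearMap.ker (commMap k mu nu 0)).subtype)
      (LinearMap.codRestrict _ (sigL mu nu)
        (fun f => LinearMap.mem_ker.mpr (sig_mem_ker mu nu f)))
      (by
        apply LinearMap.ext
        intro g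
        show phiFun mu nu (sigFun mu nu g) = g
        exact phi_sig mu nu g)
      (by
        apply LinearMap.ext
        intro x
        apply Subtype.ext
        show sigFun mu nu (phiFun mu nu (x : Matrix _ _ k)) = (x : Matrix _ _ k)
        exact sig_phi mu nu _ (LinearMap.mem_ker.mp x.2))
  have hker : Module.finrank k (LinearMap.ker (commMap k mu nu 0)) =
      ∑ i : Fin s, ∑ j : Fin t, min (mu i) (nu j) := by
    rw [E.finrank_eq, Module.finrank_pi_fintype k]
    apply Finset.sum_congr rfl
    intro i _
    rw [Module.finrank_pi_fintype k]
    apply Finset.sum_congr rfl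
    intro j _
    exact Module.finrank_fin_fun k
  have h1 := Submodule.finrank_quotient_add_finrank (LinearMap.range (commMap k mu nu 0))
  have h2 := LinearMap.finrank_range_add_finrank_ker (commMap k mu nu 0)
  omega
end

section
/- Consider 2×2 matrices over k[x] of the form M = (αx² + higher order terms, βx + h.o.t.; γx + h.o.t., δ + h.o.t.) with α, β, γ, δ ∈ k^×, viewed in the matrix problem R((4,2)×(4,2)) (entries in k[x]/(x^{min(μᵢ,νⱼ)}) with blocks (4,2)×(4,2)). The quantity αβ⁻¹γ⁻¹δ ∈ k^× is invariant under all allowed row and column operations; hence if k is infinite, the matrix problem R((4,2)×(4,2)) has infinitely many orbits. -/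
open Polynomial

/-- Truncation exponents for the matrix problem `R((4,2)×(4,2))`: the `(i,j)`-entry
lives in `k[x]/(x^{min(μᵢ,νⱼ)})` with `μ = ν = (4,2)`. -/
def trunc : Fin 2 → Fin 2 → ℕ := fun i j => if i = 0 ∧ j = 0 then 4 else 2

/-- One allowed move of the matrix problem `R((4,2)×(4,2))` on representatives
(2×2 matrices of polynomials, read modulo `x^{trunc i j}` in each entry):
replacing an entry modulo its truncation, multiplying a row or a column by a unit
(a polynomial with nonzero constant term), adding a multiple of the short row
(resp. column) times `x²` to the long row (resp. column), and adding a multiple of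
the long row (resp. column) to the short one. -/
inductive Step (k : Type*) [Field k] :
    (Fin 2 → Fin 2 → Polynomial k) → (Fin 2 → Fin 2 → Polynomial k) → Prop
  | congr (M N : Fin 2 → Fin 2 → Polynomial k)
      (h : ∀ i j, (Polynomial.X : Polynomial k) ^ trunc i j ∣ (M i j - N i j)) :
      Step k M N
  | rowMul (M : Fin 2 → Fin 2 → Polynomial k) (i : Fin 2) (u : Polynomial k)
      (hu : u.coeff 0 ≠ 0) :
      Step k M (fun i' j => if i' = i then u * M i' j else M i' j)
  | colMul (M : Fin 2 → Fin 2 → Polynomial k) (j : Fin 2) (u : Polynomial k)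
      (hu : u.coeff 0 ≠ 0) :
      Step k M (fun i j' => if j' = j then M i j' * u else M i j')
  | rowAdd01 (M : Fin 2 → Fin 2 → Polynomial k) (a : Polynomial k) :
      Step k M (fun i' j => if i' = 0 then M i' j + a * Polynomial.X ^ 2 * M 1 j else M i' j)
  | rowAdd10 (M : Fin 2 → Fin 2 → Polynomial k) (a : Polynomial k) :
      Step k M (fun i' j => if i' = 1 then M i' j + a * M 0 j else M i' j)
  | colAdd01 (M : Fin 2 → Fin 2 → Polynomial k) (a : Polynomial k) :
      Step k M (fun i j' => if j' = 0 then M i j' + a * Polynomial.X ^ 2 * M i 1 else M i j')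
  | colAdd10 (M : Fin 2 → Fin 2 → Polynomial k) (a : Polynomial k) :
      Step k M (fun i j' => if j' = 1 then M i j' + a * M i 0 else M i j')

/-- `M` has the form `(αx² + h.o.t., βx + h.o.t.; γx + h.o.t., δ + h.o.t.)`
with `α, β, γ, δ ∈ k^×`. -/
def IsForm {k : Type*} [Field k] (M : Fin 2 → Fin 2 → Polynomial k) : Prop :=
  (M 0 0).coeff 0 = 0 ∧ (M 0 0).coeff 1 = 0 ∧ (M 0 0).coeff 2 ≠ 0 ∧
  (M 0 1).coeff 0 = 0 ∧ (M 0 1).coeff 1 ≠ 0 ∧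
  (M 1 0).coeff 0 = 0 ∧ (M 1 0).coeff 1 ≠ 0 ∧
  (M 1 1).coeff 0 ≠ 0

/-- The quantity `α·β⁻¹·γ⁻¹·δ` attached to a matrix of the above form. -/
def invQuant {k : Type*} [Field k] (M : Fin 2 → Fin 2 → Polynomial k) : k :=
  (M 0 0).coeff 2 * ((M 0 1).coeff 1)⁻¹ * ((M 1 0).coeff 1)⁻¹ * (M 1 1).coeff 0

section aux
variable {k : Type*} [Field k]

lemma mc1 (p q : Polynomial k) : (p*q).coeff 1 = p.coeff 0 * q.coeff 1 + p.coeff 1 * q.coeff 0 := by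
  rw [coeff_mul, Finset.Nat.sum_antidiagonal_eq_sum_range_succ_mk]
  simp [Finset.sum_range_succ]

lemma mc2 (p q : Polynomial k) :
    (p*q).coeff 2 = p.coeff 0 * q.coeff 2 + p.coeff 1 * q.coeff 1 + p.coeff 2 * q.coeff 0 := by
  rw [coeff_mul, Finset.Nat.sum_antidiagonal_eq_sum_range_succ_mk]
  simp [Finset.sum_range_succ]

lemma xc0 (a p : Polynomial k) : (a * X^2 * p).coeff 0 = 0 := by
  have h : a * X^2 * p = a * p * X^2 := by ring
  rw [h, coeff_mul_X_pow']; simp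

lemma xc1 (a p : Polynomial k) : (a * X^2 * p).coeff 1 = 0 := by
  have h : a * X^2 * p = a * p * X^2 := by ring
  rw [h, coeff_mul_X_pow']; simp

lemma xc2 (a p : Polynomial k) : (a * X^2 * p).coeff 2 = a.coeff 0 * p.coeff 0 := by
  have h : a * X^2 * p = a * p * X^2 := by ring
  rw [h, coeff_mul_X_pow']; simp [mul_coeff_zero]

lemma ceq {t : ℕ} {p q : Polynomial k} (h : (X : Polynomial k)^t ∣ (p - q)) {n : ℕ} (hn : n < t) :
    p.coeff n = q.coeff n := by
  have := (X_pow_dvd_iff.mp h) n hn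
  simpa [sub_eq_zero, coeff_sub] using this

lemma uc0 (u p : Polynomial k) : (u*p).coeff 0 = u.coeff 0 * p.coeff 0 := mul_coeff_zero u p

lemma uc1 (u p : Polynomial k) (h0 : p.coeff 0 = 0) :
    (u*p).coeff 1 = u.coeff 0 * p.coeff 1 := by rw [mc1, h0, mul_zero, add_zero]

lemma uc2 (u p : Polynomial k) (h0 : p.coeff 0 = 0) (h1 : p.coeff 1 = 0) :
    (u*p).coeff 2 = u.coeff 0 * p.coeff 2 := by rw [mc2, h0, h1, mul_zero, mul_zero,
      add_zero, add_zero]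

lemma cu0 (u p : Polynomial k) : (p*u).coeff 0 = u.coeff 0 * p.coeff 0 := by
  rw [mul_comm]; exact uc0 u p

lemma cu1 (u p : Polynomial k) (h0 : p.coeff 0 = 0) :
    (p*u).coeff 1 = u.coeff 0 * p.coeff 1 := by rw [mul_comm]; exact uc1 u p h0

lemma cu2 (u p : Polynomial k) (h0 : p.coeff 0 = 0) (h1 : p.coeff 1 = 0) :
    (p*u).coeff 2 = u.coeff 0 * p.coeff 2 := by rw [mul_comm]; exact uc2 u p h0 h1

lemma step_main {M N : Fin 2 → Fin 2 → Polynomial k} (h : Step k M N) :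
    (IsForm M ↔ IsForm N) ∧ (IsForm M → invQuant N = invQuant M) := by
  cases h with
  | congr _ h =>
    have e00 : ∀ n < 4, (M 0 0).coeff n = (N 0 0).coeff n := fun n hn =>
      ceq (by simpa [trunc] using h 0 0) hn
    have e01 : ∀ n < 2, (M 0 1).coeff n = (N 0 1).coeff n := fun n hn =>
      ceq (by simpa [trunc] using h 0 1) hn
    have e10 : ∀ n < 2, (M 1 0).coeff n = (N 1 0).coeff n := fun n hn =>
      ceq (by simpa [trunc] using h 1 0) hn
    have e11 : ∀ n < 2, (M 1 1).coeff n = (N 1 1).coeff n := fun n hn =>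
      ceq (by simpa [trunc] using h 1 1) hn
    constructor
    · unfold IsForm
      rw [e00 0 (by norm_num), e00 1 (by norm_num), e00 2 (by norm_num),
        e01 0 (by norm_num), e01 1 (by norm_num), e10 0 (by norm_num),
        e10 1 (by norm_num), e11 0 (by norm_num)]
    · intro _
      unfold invQuant
      rw [e00 2 (by norm_num), e01 1 (by norm_num), e10 1 (by norm_num), e11 0 (by norm_num)]
  | rowMul i u hu =>
    obtain rfl | rfl : i = 0 ∨ i = 1 := by omega
    · have r00 : (fun i' j => if i' = 0 then u * M i' j else M i' j) 0 0 = u * M 0 0 := by simp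
      have r01 : (fun i' j => if i' = 0 then u * M i' j else M i' j) 0 1 = u * M 0 1 := by simp
      have r10 : (fun i' j => if i' = 0 then u * M i' j else M i' j) 1 0 = M 1 0 := by simp
      have r11 : (fun i' j => if i' = 0 then u * M i' j else M i' j) 1 1 = M 1 1 := by simp
      constructor
      · unfold IsForm
        rw [r00, r01, r10, r11]
        constructor
        · rintro ⟨h1, h2, h3, h4, h5, h6, h7, h8⟩
          refine ⟨by rw [uc0, h1, mul_zero], by rw [uc1 u _ h1, h2, mul_zero],
            by rw [uc2 u _ h1 h2]; exact mul_ne_zero hu h3, by rw [uc0, h4, mul_zero],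
            by rw [uc1 u _ h4]; exact mul_ne_zero hu h5, h6, h7, h8⟩
        · rintro ⟨h1, h2, h3, h4, h5, h6, h7, h8⟩
          rw [uc0] at h1; rw [uc0] at h4
          have e1 : (M 0 0).coeff 0 = 0 := (mul_eq_zero.mp h1).resolve_left hu
          have e4 : (M 0 1).coeff 0 = 0 := (mul_eq_zero.mp h4).resolve_left hu
          rw [uc1 u _ e1] at h2
          have e2 : (M 0 0).coeff 1 = 0 := (mul_eq_zero.mp h2).resolve_left hu
          rw [uc2 u _ e1 e2] at h3; rw [uc1 u _ e4] at h5
          exact ⟨e1, e2, right_ne_zero_of_mul h3, e4, right_ne_zero_of_mul h5, h6, h7, h8⟩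
      · rintro ⟨h1, h2, h3, h4, h5, h6, h7, h8⟩
        unfold invQuant
        rw [r00, r01, r10, r11, uc2 u _ h1 h2, uc1 u _ h4, mul_inv]
        field_simp
    · have r00 : (fun i' j => if i' = 1 then u * M i' j else M i' j) 0 0 = M 0 0 := by simp
      have r01 : (fun i' j => if i' = 1 then u * M i' j else M i' j) 0 1 = M 0 1 := by simp
      have r10 : (fun i' j => if i' = 1 then u * M i' j else M i' j) 1 0 = u * M 1 0 := by simp
      have r11 : (fun i' j => if i' = 1 then u * M i' j else M i' j) 1 1 = u * M 1 1 := by simp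
      constructor
      · unfold IsForm
        rw [r00, r01, r10, r11]
        constructor
        · rintro ⟨h1, h2, h3, h4, h5, h6, h7, h8⟩
          refine ⟨h1, h2, h3, h4, h5, by rw [uc0, h6, mul_zero],
            by rw [uc1 u _ h6]; exact mul_ne_zero hu h7, by rw [uc0]; exact mul_ne_zero hu h8⟩
        · rintro ⟨h1, h2, h3, h4, h5, h6, h7, h8⟩
          rw [uc0] at h6 h8
          have e6 : (M 1 0).coeff 0 = 0 := (mul_eq_zero.mp h6).resolve_left hu
          rw [uc1 u _ e6] at h7
          exact ⟨h1, h2, h3, h4, h5, e6, right_ne_zero_of_mul h7, right_ne_zero_of_mul h8⟩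
      · rintro ⟨h1, h2, h3, h4, h5, h6, h7, h8⟩
        unfold invQuant
        rw [r00, r01, r10, r11, uc1 u _ h6, uc0, mul_inv]
        field_simp
  | colMul j u hu =>
    obtain rfl | rfl : j = 0 ∨ j = 1 := by omega
    · have r00 : (fun i j' => if j' = 0 then M i j' * u else M i j') 0 0 = M 0 0 * u := by simp
      have r01 : (fun i j' => if j' = 0 then M i j' * u else M i j') 0 1 = M 0 1 := by simp
      have r10 : (fun i j' => if j' = 0 then M i j' * u else M i j') 1 0 = M 1 0 * u := by simp
      have r11 : (fun i j' => if j' = 0 then M i j' * u else M i j') 1 1 = M 1 1 := by simp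
      constructor
      · unfold IsForm
        rw [r00, r01, r10, r11]
        constructor
        · rintro ⟨h1, h2, h3, h4, h5, h6, h7, h8⟩
          refine ⟨by rw [cu0, h1, mul_zero], by rw [cu1 u _ h1, h2, mul_zero],
            by rw [cu2 u _ h1 h2]; exact mul_ne_zero hu h3, h4, h5,
            by rw [cu0, h6, mul_zero], by rw [cu1 u _ h6]; exact mul_ne_zero hu h7, h8⟩
        · rintro ⟨h1, h2, h3, h4, h5, h6, h7, h8⟩
          rw [cu0] at h1 h6
          have e1 : (M 0 0).coeff 0 = 0 := (mul_eq_zero.mp h1).resolve_left hu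
          have e6 : (M 1 0).coeff 0 = 0 := (mul_eq_zero.mp h6).resolve_left hu
          rw [cu1 u _ e1] at h2
          have e2 : (M 0 0).coeff 1 = 0 := (mul_eq_zero.mp h2).resolve_left hu
          rw [cu2 u _ e1 e2] at h3; rw [cu1 u _ e6] at h7
          exact ⟨e1, e2, right_ne_zero_of_mul h3, h4, h5, e6, right_ne_zero_of_mul h7, h8⟩
      · rintro ⟨h1, h2, h3, h4, h5, h6, h7, h8⟩
        unfold invQuant
        rw [r00, r01, r10, r11, cu2 u _ h1 h2, cu1 u _ h6, mul_inv]
        field_simp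
    · have r00 : (fun i j' => if j' = 1 then M i j' * u else M i j') 0 0 = M 0 0 := by simp
      have r01 : (fun i j' => if j' = 1 then M i j' * u else M i j') 0 1 = M 0 1 * u := by simp
      have r10 : (fun i j' => if j' = 1 then M i j' * u else M i j') 1 0 = M 1 0 := by simp
      have r11 : (fun i j' => if j' = 1 then M i j' * u else M i j') 1 1 = M 1 1 * u := by simp
      constructor
      · unfold IsForm
        rw [r00, r01, r10, r11]
        constructor
        · rintro ⟨h1, h2, h3, h4, h5, h6, h7, h8⟩
          refine ⟨h1, h2, h3, by rw [cu0, h4, mul_zero],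
            by rw [cu1 u _ h4]; exact mul_ne_zero hu h5, h6, h7,
            by rw [cu0]; exact mul_ne_zero hu h8⟩
        · rintro ⟨h1, h2, h3, h4, h5, h6, h7, h8⟩
          rw [cu0] at h4 h8
          have e4 : (M 0 1).coeff 0 = 0 := (mul_eq_zero.mp h4).resolve_left hu
          rw [cu1 u _ e4] at h5
          exact ⟨h1, h2, h3, e4, right_ne_zero_of_mul h5, h6, h7, right_ne_zero_of_mul h8⟩
      · rintro ⟨h1, h2, h3, h4, h5, h6, h7, h8⟩
        unfold invQuant
        rw [r00, r01, r10, r11, cu1 u _ h4, cu0, mul_inv]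
        field_simp
  | rowAdd01 a =>
    have e : ∀ j, ((M 0 j + a * X^2 * M 1 j).coeff 0 = (M 0 j).coeff 0 ∧
        (M 0 j + a * X^2 * M 1 j).coeff 1 = (M 0 j).coeff 1) := by
      intro j; constructor <;> simp [xc0, xc1]
    have e2' : (M 1 0).coeff 0 = 0 → (M 0 0 + a * X^2 * M 1 0).coeff 2 = (M 0 0).coeff 2 := by
      intro h6; simp [xc2, h6]
    constructor
    · unfold IsForm
      simp only [show ((0:Fin 2) = 0) = True by simp, show ((1:Fin 2) = 0) = False by simp,
        if_true, if_false]
      constructor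
      · rintro ⟨h1, h2, h3, h4, h5, h6, h7, h8⟩
        exact ⟨by rw [(e 0).1]; exact h1, by rw [(e 0).2]; exact h2, by rw [e2' h6]; exact h3,
          by rw [(e 1).1]; exact h4, by rw [(e 1).2]; exact h5, h6, h7, h8⟩
      · rintro ⟨h1, h2, h3, h4, h5, h6, h7, h8⟩
        exact ⟨by rw [← (e 0).1]; exact h1, by rw [← (e 0).2]; exact h2, by rw [← e2' h6]; exact h3,
          by rw [← (e 1).1]; exact h4, by rw [← (e 1).2]; exact h5, h6, h7, h8⟩
    · rintro ⟨h1, h2, h3, h4, h5, h6, h7, h8⟩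
      unfold invQuant
      simp only [show ((0:Fin 2) = 0) = True by simp, show ((1:Fin 2) = 0) = False by simp,
        if_true, if_false]
      rw [e2' h6, (e 1).2]
  | rowAdd10 a =>
    have f0 : (M 0 0).coeff 0 = 0 → (M 1 0 + a * M 0 0).coeff 0 = (M 1 0).coeff 0 := by
      intro h1; simp [mul_coeff_zero, h1]
    have f1 : (M 0 0).coeff 0 = 0 → (M 0 0).coeff 1 = 0 →
        (M 1 0 + a * M 0 0).coeff 1 = (M 1 0).coeff 1 := by
      intro h1 h2; simp [mc1, h1, h2]
    have g0 : (M 0 1).coeff 0 = 0 → (M 1 1 + a * M 0 1).coeff 0 = (M 1 1).coeff 0 := by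
      intro h4; simp [mul_coeff_zero, h4]
    constructor
    · unfold IsForm
      simp only [show ((0:Fin 2) = 1) = False by simp, show ((1:Fin 2) = 1) = True by simp,
        if_true, if_false]
      constructor
      · rintro ⟨h1, h2, h3, h4, h5, h6, h7, h8⟩
        exact ⟨h1, h2, h3, h4, h5, by rw [f0 h1]; exact h6, by rw [f1 h1 h2]; exact h7,
          by rw [g0 h4]; exact h8⟩
      · rintro ⟨h1, h2, h3, h4, h5, h6, h7, h8⟩
        exact ⟨h1, h2, h3, h4, h5, by rw [← f0 h1]; exact h6, by rw [← f1 h1 h2]; exact h7,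
          by rw [← g0 h4]; exact h8⟩
    · rintro ⟨h1, h2, h3, h4, h5, h6, h7, h8⟩
      unfold invQuant
      simp only [show ((0:Fin 2) = 1) = False by simp, show ((1:Fin 2) = 1) = True by simp,
        if_true, if_false]
      rw [f1 h1 h2, g0 h4]
  | colAdd01 a =>
    have e : ∀ i, ((M i 0 + a * X^2 * M i 1).coeff 0 = (M i 0).coeff 0 ∧
        (M i 0 + a * X^2 * M i 1).coeff 1 = (M i 0).coeff 1) := by
      intro i; constructor <;> simp [xc0, xc1]
    have e2' : (M 0 1).coeff 0 = 0 → (M 0 0 + a * X^2 * M 0 1).coeff 2 = (M 0 0).coeff 2 := by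
      intro h4; simp [xc2, h4]
    constructor
    · unfold IsForm
      simp only [show ((0:Fin 2) = 0) = True by simp, show ((1:Fin 2) = 0) = False by simp,
        if_true, if_false]
      constructor
      · rintro ⟨h1, h2, h3, h4, h5, h6, h7, h8⟩
        exact ⟨by rw [(e 0).1]; exact h1, by rw [(e 0).2]; exact h2, by rw [e2' h4]; exact h3,
          h4, h5, by rw [(e 1).1]; exact h6, by rw [(e 1).2]; exact h7, h8⟩
      · rintro ⟨h1, h2, h3, h4, h5, h6, h7, h8⟩
        exact ⟨by rw [← (e 0).1]; exact h1, by rw [← (e 0).2]; exact h2, by rw [← e2' h4]; exact h3,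
          h4, h5, by rw [← (e 1).1]; exact h6, by rw [← (e 1).2]; exact h7, h8⟩
    · rintro ⟨h1, h2, h3, h4, h5, h6, h7, h8⟩
      unfold invQuant
      simp only [show ((0:Fin 2) = 0) = True by simp, show ((1:Fin 2) = 0) = False by simp,
        if_true, if_false]
      rw [e2' h4, (e 1).2]
  | colAdd10 a =>
    have f0 : (M 0 0).coeff 0 = 0 → (M 0 1 + a * M 0 0).coeff 0 = (M 0 1).coeff 0 := by
      intro h1; simp [mul_coeff_zero, h1]
    have f1 : (M 0 0).coeff 0 = 0 → (M 0 0).coeff 1 = 0 →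
        (M 0 1 + a * M 0 0).coeff 1 = (M 0 1).coeff 1 := by
      intro h1 h2; simp [mc1, h1, h2]
    have g0 : (M 1 0).coeff 0 = 0 → (M 1 1 + a * M 1 0).coeff 0 = (M 1 1).coeff 0 := by
      intro h6; simp [mul_coeff_zero, h6]
    constructor
    · unfold IsForm
      simp only [show ((0:Fin 2) = 1) = False by simp, show ((1:Fin 2) = 1) = True by simp,
        if_true, if_false]
      constructor
      · rintro ⟨h1, h2, h3, h4, h5, h6, h7, h8⟩
        exact ⟨h1, h2, h3, by rw [f0 h1]; exact h4, by rw [f1 h1 h2]; exact h5, h6, h7,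
          by rw [g0 h6]; exact h8⟩
      · rintro ⟨h1, h2, h3, h4, h5, h6, h7, h8⟩
        exact ⟨h1, h2, h3, by rw [← f0 h1]; exact h4, by rw [← f1 h1 h2]; exact h5, h6, h7,
          by rw [← g0 h6]; exact h8⟩
    · rintro ⟨h1, h2, h3, h4, h5, h6, h7, h8⟩
      unfold invQuant
      simp only [show ((0:Fin 2) = 1) = False by simp, show ((1:Fin 2) = 1) = True by simp,
        if_true, if_false]
      rw [f1 h1 h2, g0 h6]
end aux

open Classical in
/-- The invariant, extended by `0` off the forms. -/
noncomputable def gq {k : Type*} [Field k] (M : Fin 2 → Fin 2 → Polynomial k) : k :=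
  if IsForm M then invQuant M else 0

lemma gq_step {k : Type*} [Field k] {M N : Fin 2 → Fin 2 → Polynomial k}
    (h : Step k M N) : gq M = gq N := by
  obtain ⟨hiff, hinv⟩ := step_main h
  by_cases hM : IsForm M
  · rw [gq, gq, if_pos hM, if_pos (hiff.mp hM), hinv hM]
  · rw [gq, gq, if_neg hM, if_neg fun hN => hM (hiff.mpr hN)]

/-- The family of matrices `(αx², x; x, 1)`. -/
noncomputable def Mm {k : Type*} [Field k] (α : k) : Fin 2 → Fin 2 → Polynomial k :=
  fun i j => if i = 0 then (if j = 0 then C α * X^2 else X) else (if j = 0 then X else 1)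

lemma gq_Mm {k : Type*} [Field k] (α : k) : gq (Mm α) = α := by
  have c00 : ∀ n, ((Mm α) 0 0).coeff n = (C α * X^2).coeff n := by intro n; simp [Mm]
  have c01 : ∀ n, ((Mm α) 0 1).coeff n = (X : Polynomial k).coeff n := by intro n; simp [Mm]
  have c10 : ∀ n, ((Mm α) 1 0).coeff n = (X : Polynomial k).coeff n := by intro n; simp [Mm]
  have c11 : ∀ n, ((Mm α) 1 1).coeff n = (1 : Polynomial k).coeff n := by intro n; simp [Mm]
  by_cases hα : α = 0
  · subst hα
    rw [gq, if_neg]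
    rintro ⟨-, -, h3, -⟩
    apply h3
    rw [c00]
    simp
  · rw [gq, if_pos]
    · unfold invQuant
      rw [c00 2, c01 1, c10 1, c11 0]
      simp [coeff_X_pow]
    · refine ⟨?_, ?_, ?_, ?_, ?_, ?_, ?_, ?_⟩ <;>
        simp [c00, c01, c10, c11, coeff_X_pow, hα]

/-- Every allowed row/column operation of the matrix problem `R((4,2)×(4,2))` carries a
matrix of the form `(αx²+…, βx+…; γx+…, δ+…)` (α,β,γ,δ ≠ 0) to one of the same form and
preserves the quantity `αβ⁻¹γ⁻¹δ`; hence, if `k` is infinite, the matrix problem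
`R((4,2)×(4,2))` has infinitely many orbits. -/
theorem stmt17 (k : Type*) [Field k] :
    (∀ M N : Fin 2 → Fin 2 → Polynomial k, Step k M N → IsForm M →
      IsForm N ∧ invQuant N = invQuant M) ∧
    (Infinite k → Infinite (Quot (Step k))) := by
  constructor
  · intro M N h hM
    obtain ⟨hiff, hinv⟩ := step_main h
    exact ⟨hiff.mp hM, hinv hM⟩
  · intro hk
    refine Infinite.of_injective (fun α : k => Quot.mk (Step k) (Mm α)) ?_
    intro a b hab
    have h2 := congrArg (Quot.lift gq (fun _ _ h => gq_step h)) hab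
    simpa [gq_Mm] using h2
end

section
/- If k is a finite field with q elements, then the number of conjugacy classes of the affine general linear group AGL_n(k) equals c_n + c_{n−1} + ... + c_1 + c_0, where c_d is the number of conjugacy classes of GL_d(k) (with the convention c_0 = 1). -/
/-!
A finite group `G` has `c(G) * |G|` commuting pairs. Writing elements of `AGL_n` as `(r, A)`,
the elements `(r, A)` and `(s, B)` commute iff `A` and `B` commute and `r (B - 1) = s (A - 1)`.
The solutions `(r, s)` form the left kernel of the `2n × n` matrix `(B - 1; 1 - A)`, which has
`q^n` times as many elements as its right kernel, the common fixed vectors of `A` and `B`.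
Counting the commuting pairs `(A, B)` together with a common fixed vector `x` by `x` instead:
`x = 0` contributes the commuting pairs of `GL_n`, and the nonzero vectors form one orbit of
`GL_n` whose stabilizers are conjugate to `AGL_{n-1}`. Hence
`c(AGL_n) q^n |GL_n| = q^n (c(GL_n) + c(AGL_{n-1})) |GL_n|`, and induction on `n` finishes.
-/

/-- The affine general linear group `AGL_n(k)`, realized as the subgroup of
`GL_{n+1}(k)` of matrices of block form `(1, r; 0, A)` with `r` a row vector
and `A ∈ GL_n(k)`, i.e. those invertible matrices whose 0-th column is `e₀`. -/
def AGL (k : Type*) [Field k] (n : ℕ) :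
    Subgroup (Matrix.GeneralLinearGroup (Fin (n + 1)) k) where
  carrier := {g | ∀ i : Fin (n + 1),
    (g : Matrix (Fin (n + 1)) (Fin (n + 1)) k) i 0 = if i = 0 then 1 else 0}
  one_mem' := by
    intro i
    simp [Matrix.one_apply]
  mul_mem' := by
    intro a b ha hb
    have hb' : ∀ j : Fin (n + 1),
        (b : Matrix (Fin (n + 1)) (Fin (n + 1)) k) j 0 = if j = 0 then 1 else 0 := hb
    have ha' : ∀ j : Fin (n + 1),
        (a : Matrix (Fin (n + 1)) (Fin (n + 1)) k) j 0 = if j = 0 then 1 else 0 := ha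
    intro i
    show ((a * b : Matrix.GeneralLinearGroup (Fin (n + 1)) k) :
      Matrix (Fin (n + 1)) (Fin (n + 1)) k) i 0 = _
    rw [Units.val_mul, Matrix.mul_apply]
    simp only [hb', mul_ite, mul_one, mul_zero]
    rw [Finset.sum_ite_eq' Finset.univ (0 : Fin (n + 1))
      (fun l => (a : Matrix (Fin (n + 1)) (Fin (n + 1)) k) i l)]
    simp [ha' i]
  inv_mem' := by
    intro a ha
    have ha' : ∀ j : Fin (n + 1),
        (a : Matrix (Fin (n + 1)) (Fin (n + 1)) k) j 0 = if j = 0 then 1 else 0 := ha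
    intro i
    show ((a⁻¹ : Matrix.GeneralLinearGroup (Fin (n + 1)) k) :
      Matrix (Fin (n + 1)) (Fin (n + 1)) k) i 0 = _
    have h2 : (((a⁻¹ : Matrix.GeneralLinearGroup (Fin (n + 1)) k) :
        Matrix (Fin (n + 1)) (Fin (n + 1)) k) *
        ((a : Matrix.GeneralLinearGroup (Fin (n + 1)) k) :
          Matrix (Fin (n + 1)) (Fin (n + 1)) k)) i 0 =
        ((a⁻¹ : Matrix.GeneralLinearGroup (Fin (n + 1)) k) :
          Matrix (Fin (n + 1)) (Fin (n + 1)) k) i 0 := by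
      rw [Matrix.mul_apply]
      simp only [ha', mul_ite, mul_one, mul_zero]
      rw [Finset.sum_ite_eq' Finset.univ (0 : Fin (n + 1))
        (fun l => ((a⁻¹ : Matrix.GeneralLinearGroup (Fin (n + 1)) k) :
          Matrix (Fin (n + 1)) (Fin (n + 1)) k) i l)]
      simp
    rw [← h2, Units.inv_mul, Matrix.one_apply]

open Matrix MulAction

section CommutingPairs

variable {G H : Type*} [Group G] [Group H]

lemma MulEquiv.card_commute_eq (e : G ≃* H) :
    Nat.card {p : G × G // Commute p.1 p.2} = Nat.card {p : H × H // Commute p.1 p.2} :=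
  Nat.card_congr <| (e.toEquiv.prodCongr e.toEquiv).subtypeEquiv fun p => by
    simp [Commute, SemiconjBy, ← map_mul, e.injective.eq_iff]

lemma card_conjClasses_of_subsingleton [Subsingleton G] : Nat.card (ConjClasses G) = 1 :=
  have := ConjClasses.mk_surjective.subsingleton (α := G)
  Nat.card_eq_one_iff_unique.2 ⟨this, ⟨ConjClasses.mk 1⟩⟩

variable (G) {X : Type*} [MulAction G X]

def MulAction.sigmaCommuteStabilizerEquiv :
    (Σ x : X, {p : stabilizer G x × stabilizer G x // Commute p.1 p.2}) ≃
      Σ p : {p : G × G // Commute p.1 p.2}, {x : X // p.1.1 • x = x ∧ p.1.2 • x = x} where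
  toFun c := ⟨⟨(c.2.1.1, c.2.1.2), congrArg Subtype.val c.2.2⟩, c.1, c.2.1.1.2, c.2.1.2.2⟩
  invFun c := ⟨c.2.1, ⟨(⟨c.1.1.1, c.2.2.1⟩, ⟨c.1.1.2, c.2.2.2⟩), Subtype.ext c.1.2⟩⟩
  left_inv _ := rfl
  right_inv _ := rfl

theorem MulAction.sum_card_commute_stabilizer_orbit [Finite G] (a : X) [Fintype (orbit G a)] :
    ∑ x ∈ (orbit G a).toFinset,
        Nat.card {p : stabilizer G x × stabilizer G x // Commute p.1 p.2} =
      Nat.card (ConjClasses (stabilizer G a)) * Nat.card G := by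
  have hconst : ∀ x ∈ (orbit G a).toFinset,
      Nat.card {p : stabilizer G x × stabilizer G x // Commute p.1 p.2} =
        Nat.card {p : stabilizer G a × stabilizer G a // Commute p.1 p.2} := by
    intro x hx
    obtain ⟨g, rfl⟩ := Set.mem_toFinset.1 hx
    exact ((stabilizerEquivStabilizer rfl).card_commute_eq).symm
  rw [Finset.sum_congr rfl hconst, Finset.sum_const, Set.toFinset_card, smul_eq_mul,
    card_comm_eq_card_conjClasses_mul_card, ← Subgroup.card_mul_index (stabilizer G a),
    index_stabilizer, Set.ncard_eq_toFinset_card', Set.toFinset_card]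
  ring

end CommutingPairs

lemma stabilizer_zero_eq_top {G M : Type*} [Group G] [AddMonoid M] [DistribMulAction G M] :
    stabilizer G (0 : M) = ⊤ :=
  (Subgroup.eq_top_iff' _).2 fun g => smul_zero g

theorem exists_linearEquiv_apply_eq {K V : Type*} [Field K] [AddCommGroup V] [Module K V]
    {x y : V} (hx : x ≠ 0) (hy : y ≠ 0) : ∃ g : V ≃ₗ[K] V, g x = y := by
  obtain ⟨g, hg⟩ := Submodule.exists_linearEquiv_restrict_eq
    ((LinearEquiv.toSpanNonzeroSingleton K V x hx).symm.trans
      (LinearEquiv.toSpanNonzeroSingleton K V y hy))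
  refine ⟨g, ?_⟩
  rw [← hg ⟨x, Submodule.mem_span_singleton_self x⟩]
  simp [LinearEquiv.coord_self]

section FiniteField

variable {k : Type*} [Field k] [Fintype k]

theorem card_ker_vecMulLinear_mul {m n : Type*} [Fintype m] [Fintype n] [DecidableEq n]
    (M : Matrix m n k) :
    Nat.card (LinearMap.ker M.vecMulLinear) * Fintype.card k ^ Fintype.card n =
      Fintype.card k ^ Fintype.card m * Nat.card (LinearMap.ker M.mulVecLin) := by
  have hrank : Module.finrank k (LinearMap.range M.vecMulLinear) = M.rank := by
    rw [← Matrix.mulVecLin_transpose]; exact M.rank_transpose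
  have hrow := LinearMap.finrank_range_add_finrank_ker M.vecMulLinear
  have hcol := LinearMap.finrank_range_add_finrank_ker M.mulVecLin
  rw [hrank] at hrow
  rw [← Matrix.rank] at hcol
  simp only [Module.finrank_fintype_fun_eq_card] at hrow hcol
  rw [Module.natCard_eq_pow_finrank (K := k) (V := LinearMap.ker M.vecMulLinear),
    Module.natCard_eq_pow_finrank (K := k) (V := LinearMap.ker M.mulVecLin),
    Nat.card_eq_fintype_card, ← pow_add, ← pow_add]
  congr 1
  omega

theorem card_add_vecMul_eq_add_vecMul {n : Type*} [Fintype n] [DecidableEq n] (A B : Matrix n n k) :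
    Nat.card {rs : (n → k) × (n → k) // rs.2 + rs.1 ᵥ* B = rs.1 + rs.2 ᵥ* A} =
      Fintype.card k ^ Fintype.card n *
        Nat.card {x : n → k // A *ᵥ x = x ∧ B *ᵥ x = x} := by
  -- Both sets are kernels of the matrix `(B - 1; 1 - A)`, acting on rows and on columns.
  have hrow : {rs : (n → k) × (n → k) // rs.2 + rs.1 ᵥ* B = rs.1 + rs.2 ᵥ* A} ≃
      LinearMap.ker (fromRows (B - 1) (1 - A)).vecMulLinear :=
    (Equiv.sumArrowEquivProdArrow n n k).symm.subtypeEquiv fun rs => by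
      change _ ↔ Sum.elim rs.1 rs.2 ᵥ* _ = 0
      rw [sumElim_vecMul_fromRows, vecMul_sub, vecMul_sub, vecMul_one, vecMul_one, ← sub_eq_zero]
      exact Iff.of_eq (congrArg (· = 0) (by abel))
  have hcol : {x : n → k // A *ᵥ x = x ∧ B *ᵥ x = x} ≃
      LinearMap.ker (fromRows (B - 1) (1 - A)).mulVecLin :=
    Equiv.subtypeEquivRight fun x => by
      rw [LinearMap.mem_ker, mulVecLin_apply, fromRows_mulVec, sub_mulVec, sub_mulVec,
        one_mulVec, ← Sum.elim_zero_zero, Sum.elim_eq_iff, sub_eq_zero, sub_eq_zero,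
        eq_comm (a := x), and_comm]
  have := card_ker_vecMulLinear_mul (fromRows (B - 1) (1 - A))
  rw [← Nat.card_congr hrow, ← Nat.card_congr hcol, Fintype.card_sum, pow_add,
    mul_assoc] at this
  exact Nat.eq_of_mul_eq_mul_right (by positivity) (this.trans (mul_comm _ _))

end FiniteField

namespace AGL

variable {k : Type*} [Field k] {n : ℕ}

-- The block matrix `(1, r; 0, A)`.
def affineMatrix (r : Fin n → k) (A : Matrix (Fin n) (Fin n) k) :
    Matrix (Fin (n + 1)) (Fin (n + 1)) k :=
  of (Fin.cons (Fin.cons 1 r) fun i => Fin.cons 0 (A i))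

section Entries

variable (r : Fin n → k) (A : Matrix (Fin n) (Fin n) k) (i j : Fin n)

@[simp] lemma affineMatrix_zero_zero : affineMatrix r A 0 0 = 1 := rfl
@[simp] lemma affineMatrix_zero_succ : affineMatrix r A 0 j.succ = r j := by simp [affineMatrix]
@[simp] lemma affineMatrix_succ_zero : affineMatrix r A i.succ 0 = 0 := by simp [affineMatrix]
@[simp] lemma affineMatrix_succ_succ : affineMatrix r A i.succ j.succ = A i j := by
  simp [affineMatrix]
@[simp] lemma affineMatrix_submatrix_succ_succ :
    (affineMatrix r A).submatrix Fin.succ Fin.succ = A :=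
  rfl

end Entries

lemma affineMatrix_mul (r s : Fin n → k) (A B : Matrix (Fin n) (Fin n) k) :
    affineMatrix r A * affineMatrix s B = affineMatrix (s + r ᵥ* B) (A * B) := by
  ext i j
  refine Fin.cases (Fin.cases ?_ fun j => ?_) (fun i => Fin.cases ?_ fun j => ?_) i j <;>
    simp [mul_apply, Fin.sum_univ_succ, vecMul, dotProduct]

lemma affineMatrix_inj {r s : Fin n → k} {A B : Matrix (Fin n) (Fin n) k} :
    affineMatrix r A = affineMatrix s B ↔ r = s ∧ A = B := by
  refine ⟨fun h => ⟨funext fun j => ?_, ext fun i j => ?_⟩,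
    fun ⟨hr, hA⟩ => hr ▸ hA ▸ rfl⟩
  · simpa using congr_fun (congr_fun h 0) j.succ
  · simpa using congr_fun (congr_fun h i.succ) j.succ

lemma det_affineMatrix (r : Fin n → k) (A : Matrix (Fin n) (Fin n) k) :
    (affineMatrix r A).det = A.det := by
  simp [det_succ_column_zero, Fin.sum_univ_succ]

lemma eq_affineMatrix {g : Matrix (Fin (n + 1)) (Fin (n + 1)) k}
    (hg : ∀ i, g i 0 = if i = 0 then 1 else 0) :
    g = affineMatrix (fun j => g 0 j.succ) (g.submatrix Fin.succ Fin.succ) := by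
  ext i j
  refine Fin.cases (Fin.cases ?_ fun j => ?_) (fun i => Fin.cases ?_ fun j => ?_) i j <;>
    simp [hg]

lemma affineMatrix_col_zero (r : Fin n → k) (A : Matrix (Fin n) (Fin n) k) (i : Fin (n + 1)) :
    affineMatrix r A i 0 = if i = 0 then 1 else 0 := by
  cases i using Fin.cases <;> simp [Fin.succ_ne_zero]

def mk (r : Fin n → k) (A : GL (Fin n) k) : AGL k n :=
  ⟨.mkOfDetNeZero (affineMatrix r A) (by rw [det_affineMatrix]; exact A.det_ne_zero),
    affineMatrix_col_zero r A⟩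

lemma val_mk (r : Fin n → k) (A : GL (Fin n) k) :
    ((mk r A : GL (Fin (n + 1)) k) : Matrix (Fin (n + 1)) (Fin (n + 1)) k) = affineMatrix r A :=
  rfl

lemma mk_mul (r s : Fin n → k) (A B : GL (Fin n) k) :
    mk r A * mk s B = mk (s + r ᵥ* B) (A * B) :=
  Subtype.ext <| Units.ext <| affineMatrix_mul r s A B

lemma mk_inj {r s : Fin n → k} {A B : GL (Fin n) k} : mk r A = mk s B ↔ r = s ∧ A = B := by
  rw [Subtype.ext_iff, Units.ext_iff, val_mk, val_mk, affineMatrix_inj, Units.ext_iff]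

lemma mk_surjective (g : AGL k n) : ∃ r A, mk r A = g := by
  obtain ⟨g, hg⟩ := g
  have hg' := eq_affineMatrix hg
  have hA : (g.val.submatrix Fin.succ Fin.succ).det ≠ 0 := by
    rw [← det_affineMatrix (fun j => g.val 0 j.succ), ← hg']
    exact g.det_ne_zero
  exact ⟨_, .mkOfDetNeZero _ hA, Subtype.ext <| Units.ext hg'.symm⟩

lemma commute_mk_iff {r s : Fin n → k} {A B : GL (Fin n) k} :
    Commute (mk r A) (mk s B) ↔ Commute A B ∧ s + r ᵥ* B = r + s ᵥ* A := by
  rw [Commute, SemiconjBy, mk_mul, mk_mul, mk_inj, and_comm]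
  rfl

noncomputable def equivProd : (Fin n → k) × GL (Fin n) k ≃ AGL k n :=
  .ofBijective (fun p => mk p.1 p.2)
    ⟨fun _ _ h => Prod.ext_iff.2 (mk_inj.1 h), fun g =>
      let ⟨r, A, h⟩ := mk_surjective g; ⟨(r, A), h⟩⟩

lemma card_eq [Fintype k] :
    Nat.card (AGL k n) = Fintype.card k ^ n * Nat.card (GL (Fin n) k) := by
  rw [← Nat.card_congr equivProd, Nat.card_prod, Nat.card_fun, Nat.card_eq_fintype_card,
    Nat.card_eq_fintype_card (α := Fin n), Fintype.card_fin]

noncomputable def commuteEquiv :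
    {p : AGL k n × AGL k n // Commute p.1 p.2} ≃
      Σ c : {p : GL (Fin n) k × GL (Fin n) k // Commute p.1 p.2},
        {rs : (Fin n → k) × (Fin n → k) // rs.2 + rs.1 ᵥ* c.1.2 = rs.1 + rs.2 ᵥ* c.1.1} :=
  ((equivProd.prodCongr equivProd).subtypeEquiv
      (p := fun q => Commute q.1.2 q.2.2 ∧ q.2.1 + q.1.1 ᵥ* q.2.2 = q.1.1 + q.2.1 ᵥ* q.1.2)
      fun _ => commute_mk_iff.symm).symm.trans
    { toFun := fun x => ⟨⟨(x.1.1.2, x.1.2.2), x.2.1⟩, ⟨(x.1.1.1, x.1.2.1), x.2.2⟩⟩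
      invFun := fun y => ⟨((y.2.1.1, y.1.1.1), (y.2.1.2, y.1.1.2)), ⟨y.1.2, y.2.2⟩⟩
      left_inv := fun _ => rfl
      right_inv := fun _ => rfl }

theorem card_commute [Fintype k] :
    Nat.card {p : AGL k n × AGL k n // Commute p.1 p.2} =
      Fintype.card k ^ n * Nat.card (Σ c : {p : GL (Fin n) k × GL (Fin n) k // Commute p.1 p.2},
        {x : Fin n → k // c.1.1 • x = x ∧ c.1.2 • x = x}) := by
  classical
  rw [Nat.card_congr commuteEquiv, Nat.card_sigma, Nat.card_sigma, Finset.mul_sum]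
  simp only [card_add_vecMul_eq_add_vecMul, Fintype.card_fin]
  rfl

end AGL

section GLAction

variable {k : Type*} [Field k]

lemma stabilizer_single_zero (n : ℕ) :
    stabilizer (GL (Fin (n + 1)) k) (Pi.single 0 1 : Fin (n + 1) → k) = AGL k n := by
  ext g
  rw [mem_stabilizer_iff, Units.smul_def, smul_eq_mulVec, mulVec_single_one, funext_iff]
  simp only [col_apply, Pi.single_apply]
  rfl

lemma orbit_eq_setOf_ne_zero {ι : Type*} [Fintype ι] [DecidableEq ι] {v : ι → k}
    (hv : v ≠ 0) :
    orbit (GL ι k) v = {x | x ≠ 0} := by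
  ext x
  refine ⟨fun ⟨g, hg⟩ => hg ▸ (smul_ne_zero_iff_ne g).2 hv, fun hx => ?_⟩
  obtain ⟨g, hg⟩ := exists_linearEquiv_apply_eq (K := k) hv hx
  refine ⟨GeneralLinearGroup.toLin.symm (.ofLinearEquiv g), ?_⟩
  change (_ : Matrix ι ι k) *ᵥ v = x
  rwa [← mulVecLin_apply, ← GeneralLinearGroup.coe_toLin, MulEquiv.apply_symm_apply]

theorem card_sigma_commute_fixed_GL [Fintype k] (n : ℕ) :
    Nat.card (Σ c : {p : GL (Fin (n + 1)) k × GL (Fin (n + 1)) k // Commute p.1 p.2},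
        {x : Fin (n + 1) → k // c.1.1 • x = x ∧ c.1.2 • x = x}) =
      (Nat.card (ConjClasses (GL (Fin (n + 1)) k)) + Nat.card (ConjClasses (AGL k n))) *
        Nat.card (GL (Fin (n + 1)) k) := by
  classical
  have horbit : (Finset.univ.erase 0 : Finset (Fin (n + 1) → k)) =
      (orbit (GL (Fin (n + 1)) k) (Pi.single 0 1)).toFinset := by
    ext x
    simp [orbit_eq_setOf_ne_zero (Pi.single_ne_zero_iff.2 one_ne_zero)]
  rw [← Nat.card_congr (sigmaCommuteStabilizerEquiv _), Nat.card_sigma,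
    ← Finset.add_sum_erase _ _ (Finset.mem_univ 0), horbit,
    sum_card_commute_stabilizer_orbit, stabilizer_single_zero, stabilizer_zero_eq_top,
    Subgroup.topEquiv.card_commute_eq, card_comm_eq_card_conjClasses_mul_card, add_mul]

theorem card_conjClasses_AGL_succ [Fintype k] (n : ℕ) :
    Nat.card (ConjClasses (AGL k (n + 1))) =
      Nat.card (ConjClasses (GL (Fin (n + 1)) k)) + Nat.card (ConjClasses (AGL k n)) := by
  have h := card_comm_eq_card_conjClasses_mul_card (AGL k (n + 1))
  rw [AGL.card_commute, card_sigma_commute_fixed_GL, AGL.card_eq] at h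
  have hpos : 0 < Fintype.card k ^ (n + 1) * Nat.card (GL (Fin (n + 1)) k) :=
    Nat.mul_pos (pow_pos Fintype.card_pos _) Nat.card_pos
  exact Nat.eq_of_mul_eq_mul_right hpos (by rw [← h]; ring)

end GLAction

/-- For a finite field `k`, the number of conjugacy classes of `AGL_n(k)` is
`c_n + c_{n−1} + ⋯ + c_0`, where `c_d` is the number of conjugacy classes of
`GL_d(k)` (and `c_0 = 1`). -/
theorem stmt18 (k : Type*) [Field k] [Fintype k] (n : ℕ) :
    Nat.card (ConjClasses (AGL k n)) =
      ∑ d ∈ Finset.range (n + 1),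
        Nat.card (ConjClasses (Matrix.GeneralLinearGroup (Fin d) k)) := by
  induction n with
  | zero =>
    have : Subsingleton (AGL k 0) := AGL.equivProd.symm.subsingleton
    rw [Finset.sum_range_one, card_conjClasses_of_subsingleton, card_conjClasses_of_subsingleton]
  | succ n ih => rw [Finset.sum_range_succ, ← ih, card_conjClasses_AGL_succ, add_comm]
end
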